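/- arXiv:1708.08641 — 8 statements merged into one kernel-verified Lean document; each statement's English description precedes it below -/
import Mathlib

section
/- Let G be an edge-colored complete graph and let C be a properly edge-colored cycle in G. Then for each vertex v on C, there exists a properly edge-colored cycle C' of length at most 4 in G containing v with V(C') ⊆ V(C). -/
/-- Number of edges of color `a` incident with `v` (monochromatic degree). -/
noncomputable def monDeg {V : Type*} (col : V → V → ℕ) (v : V) (a : ℕ) : ℕ :=
  {u | u ≠ v ∧ col v u = a}.ncard

/-- Color degree of a vertex: number of distinct colors on incident edges. -/
noncomputable def colorDeg {V : Type*} (col : V → V → ℕ) (v : V) : ℕ :=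
  (col v '' {u | u ≠ v}).ncard

/-- Maximum monochromatic degree Δ^mon. -/
noncomputable def maxMonDeg {V : Type*} (col : V → V → ℕ) : ℕ :=
  sSup {d | ∃ v a, d = monDeg col v a}

/-- Number of colors appearing on edges. -/
noncomputable def numColors {V : Type*} (col : V → V → ℕ) : ℕ :=
  {a | ∃ u v : V, u ≠ v ∧ col u v = a}.ncard

/-- A properly edge-colored (PC) cycle of length `m`, given by an injective
map `c : ZMod m → V`; adjacent edges get distinct colors. -/
def IsPCCycle {V : Type*} (col : V → V → ℕ) (m : ℕ) (c : ZMod m → V) : Prop :=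
  3 ≤ m ∧ Function.Injective c ∧
    ∀ i : ZMod m, col (c i) (c (i + 1)) ≠ col (c (i + 1)) (c (i + 2))

/-- `k` pairwise vertex-disjoint PC cycles. -/
def HasKDisjointPCCycles {V : Type*} (col : V → V → ℕ) (k : ℕ) : Prop :=
  ∃ (m : Fin k → ℕ) (c : ∀ j, ZMod (m j) → V),
    (∀ j, IsPCCycle col (m j) (c j)) ∧
    ∀ j j', j ≠ j' → Disjoint (Set.range (c j)) (Set.range (c j'))

/-- `k` pairwise vertex-disjoint PC cycles, each of length at most 4. -/
def HasKDisjointShortPCCycles {V : Type*} (col : V → V → ℕ) (k : ℕ) : Prop :=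
  ∃ (m : Fin k → ℕ) (c : ∀ j, ZMod (m j) → V),
    (∀ j, IsPCCycle col (m j) (c j) ∧ m j ≤ 4) ∧
    ∀ j j', j ≠ j' → Disjoint (Set.range (c j)) (Set.range (c j'))

/-- A directed cycle of length `m` in a digraph with arc relation `A`. -/
def IsDicycle {V : Type*} (A : V → V → Prop) (m : ℕ) (c : ZMod m → V) : Prop :=
  2 ≤ m ∧ Function.Injective c ∧ ∀ i : ZMod m, A (c i) (c (i + 1))

/-- `k` pairwise vertex-disjoint directed cycles. -/
def HasKDisjointDicycles {V : Type*} (A : V → V → Prop) (k : ℕ) : Prop :=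
  ∃ (m : Fin k → ℕ) (c : ∀ j, ZMod (m j) → V),
    (∀ j, IsDicycle A (m j) (c j)) ∧
    ∀ j j', j ≠ j' → Disjoint (Set.range (c j)) (Set.range (c j'))

/-- A monochromatic edge-cut: a bipartition with all crossing edges one color. -/
def HasMonochromaticCut {V : Type*} (col : V → V → ℕ) : Prop :=
  ∃ S : Set V, S.Nonempty ∧ Sᶜ.Nonempty ∧ ∃ a, ∀ x ∈ S, ∀ y ∈ Sᶜ, col x y = a

/-- A rainbow triangle: three vertices with pairwise distinct edge colors. -/
def HasRainbowTriangle {V : Type*} (col : V → V → ℕ) : Prop :=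
  ∃ x y z : V, x ≠ y ∧ y ≠ z ∧ x ≠ z ∧
    col x y ≠ col y z ∧ col y z ≠ col x z ∧ col x y ≠ col x z

/-- A Gallai partition of an edge-colored complete graph. -/
def HasGallaiPartition {V : Type*} (col : V → V → ℕ) : Prop :=
  ∃ (q : ℕ) (U : Fin q → Set V), 2 ≤ q ∧ (∀ i, (U i).Nonempty) ∧
    (∀ i j, i ≠ j → Disjoint (U i) (U j)) ∧ (⋃ i, U i) = Set.univ ∧
    (∀ i j, i ≠ j → ∃ a, ∀ x ∈ U i, ∀ y ∈ U j, col x y = a) ∧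
    ∃ a b, ∀ i j, i ≠ j → ∀ x ∈ U i, ∀ y ∈ U j, col x y = a ∨ col x y = b

open Function Set

/-! Let `c₀c₁…c_{m-1}` be a PC cycle with `m ≥ 5`. Each of the chords `c₀c₂` and `c₀c₃` cuts the
cycle into a cycle of length at most 4 through `c₀` and a shorter cycle through `c₀`; together
with the triangle `c₀c₂c₃` this gives five candidate cycles through `c₀`, and comparing the two
chord colours with the colours of the cycle edges shows that one of them is properly coloured.
Either it is short, or it is shorter than the original cycle and we recurse. -/

def HasShortPCCycleThrough {V : Type*} (col : V → V → ℕ) (S : Set V) (v : V) : Prop :=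
  ∃ (m : ℕ) (c : ZMod m → V), IsPCCycle col m c ∧ m ≤ 4 ∧ v ∈ range c ∧ range c ⊆ S

namespace HasShortPCCycleThrough

variable {V : Type*} {col : V → V → ℕ} {S : Set V}

lemma mono {T : Set V} {v : V} (h : HasShortPCCycleThrough col S v) (hST : S ⊆ T) :
    HasShortPCCycleThrough col T v :=
  let ⟨m, c, hC, hm, hv, hS⟩ := h
  ⟨m, c, hC, hm, hv, hS.trans hST⟩

lemma of_triangle {x y z : V} (hx : x ∈ S) (hy : y ∈ S) (hz : z ∈ S)
    (hxy : x ≠ y) (hyz : y ≠ z) (hxz : x ≠ z)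
    (h₁ : col x y ≠ col y z) (h₂ : col y z ≠ col z x) (h₃ : col z x ≠ col x y) :
    HasShortPCCycleThrough col S x := by
  refine ⟨3, ![x, y, z], ⟨le_rfl, ?_, ?_⟩, by norm_num, ⟨0, rfl⟩, ?_⟩
  · intro i j h
    fin_cases i <;> fin_cases j <;> simp_all <;> rfl
  · intro i
    fin_cases i <;> assumption
  · rintro _ ⟨i, rfl⟩
    fin_cases i <;> assumption

lemma of_square {w x y z : V} (hw : w ∈ S) (hx : x ∈ S) (hy : y ∈ S) (hz : z ∈ S)
    (hwx : w ≠ x) (hwy : w ≠ y) (hwz : w ≠ z) (hxy : x ≠ y) (hxz : x ≠ z) (hyz : y ≠ z)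
    (h₁ : col w x ≠ col x y) (h₂ : col x y ≠ col y z) (h₃ : col y z ≠ col z w)
    (h₄ : col z w ≠ col w x) :
    HasShortPCCycleThrough col S w := by
  refine ⟨4, ![w, x, y, z], ⟨by norm_num, ?_, ?_⟩, le_rfl, ⟨0, rfl⟩, ?_⟩
  · intro i j h
    fin_cases i <;> fin_cases j <;> simp_all <;> rfl
  · intro i
    fin_cases i <;> assumption
  · rintro _ ⟨i, rfl⟩
    fin_cases i <;> assumption

end HasShortPCCycleThrough

/-- The indices `0, t, t + 1, …, m - 1` of the cycle obtained from `c₀c₁…c_{m-1}` by the chord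
`c₀c_t`. -/
lemma exists_shortcut_index_map {m t : ℕ} (ht : 0 < t) (htm : t < m) :
    ∃ φ : ZMod (m - t + 1) → ZMod m, Injective φ ∧ φ 0 = 0 ∧ φ 1 = t ∧
      ∀ i, i ≠ 0 → φ (i + 1) = φ i + 1 := by
  let ψ : ZMod (m - t + 1) → ℕ := fun i => if i.val = 0 then 0 else i.val + (t - 1)
  have hψ_lt (i) : ψ i < m := by
    have := ZMod.val_lt i
    simp only [ψ]
    split_ifs <;> omega
  have hψ_inj : Injective ψ := fun i j h => ZMod.val_injective _ <| by
    simp only [ψ] at h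
    split_ifs at h <;> omega
  have hval_one : (1 : ZMod (m - t + 1)).val = 1 := ZMod.val_one'' (by omega)
  refine ⟨fun i => (ψ i : ZMod m), fun i j h => hψ_inj ?_, by simp [ψ], ?_, ?_⟩
  · simpa [ZMod.val_natCast_of_lt (hψ_lt _)] using congrArg ZMod.val h
  · simp only [ψ, hval_one, one_ne_zero, if_false]
    congr 1
    omega
  intro i hi
  rw [Ne, ← ZMod.val_eq_zero] at hi
  by_cases hi' : i = -1
  · subst hi'
    have hm : ((m - 1 : ℕ) : ZMod m) + 1 = 0 := by
      rw [← Nat.cast_add_one, Nat.sub_add_cancel (by omega), ZMod.natCast_self]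
    simp only [ψ, neg_add_cancel, ZMod.val_zero, if_true, ZMod.val_neg_one,
      show m - t ≠ 0 by omega, if_false, show m - t + (t - 1) = m - 1 by omega]
    exact_mod_cast hm.symm
  have hlt : i.val + 1 < m - t + 1 := by
    have := ZMod.val_lt i
    have : i.val ≠ m - t := fun h => hi' (ZMod.val_injective _ (by rw [h, ZMod.val_neg_one]))
    omega
  have hsucc : (i + 1).val = i.val + 1 := by
    rw [ZMod.val_add_of_lt (by rwa [hval_one]), hval_one]
  simp only [ψ, hsucc, hi, if_false, Nat.add_eq_zero_iff, one_ne_zero, and_false]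
  push_cast
  ring

/-- With `a₀, …, a₄` the colours of `c_{-1}c₀, c₀c₁, …, c₃c₄` and `x, y` those of the chords
`c₀c₂, c₀c₃`, the disjuncts say that the cycles `c₀c₁c₂`, `c₀c₁c₂c₃`, `c₀c₂c₃`,
`c₀c₂c₃…c_{m-1}` and `c₀c₃c₄…c_{m-1}` respectively are properly coloured. -/
lemma chord_colors_cases {α : Type*} {a₀ a₁ a₂ a₃ a₄ x y : α} (h₀₁ : a₀ ≠ a₁) (h₂₃ : a₂ ≠ a₃)
    (h₃₄ : a₃ ≠ a₄) :
    (a₂ ≠ x ∧ x ≠ a₁) ∨ (a₃ ≠ y ∧ y ≠ a₁) ∨ (x ≠ a₃ ∧ a₃ ≠ y ∧ y ≠ x) ∨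
      (x ≠ a₃ ∧ a₀ ≠ x) ∨ (y ≠ a₄ ∧ a₀ ≠ y) := by
  grind

namespace IsPCCycle

variable {V : Type*} {col : V → V → ℕ} {m : ℕ} {c : ZMod m → V}

lemma comp_add_right (hC : IsPCCycle col m c) (k : ZMod m) :
    IsPCCycle col m (fun i => c (i + k)) := by
  refine ⟨hC.1, hC.2.1.comp (add_left_injective k), fun i => ?_⟩
  simpa only [add_right_comm _ k] using hC.2.2 (i + k)

lemma natCast_ne (hC : IsPCCycle col m c) {a b : ℕ} (ha : a < m) (hb : b < m) (hab : a ≠ b) :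
    c a ≠ c b := fun h => hab <| by
  simpa [ZMod.val_natCast_of_lt ha, ZMod.val_natCast_of_lt hb] using congrArg ZMod.val (hC.2.1 h)

lemma comp_of_add_one (hC : IsPCCycle col m c) {n : ℕ} (hn : 3 ≤ n) {φ : ZMod n → ZMod m}
    (hφ : Injective φ) (hstep : ∀ i, i ≠ 0 → φ (i + 1) = φ i + 1)
    (hjump : col (c (φ 0)) (c (φ 1)) ≠ col (c (φ 1)) (c (φ 1 + 1)))
    (hjump' : col (c (φ 0 - 1)) (c (φ 0)) ≠ col (c (φ 0)) (c (φ 1))) :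
    IsPCCycle col n (c ∘ φ) := by
  have h1 : (1 : ZMod n) ≠ 0 := by rw [Ne, ZMod.one_eq_zero_iff]; omega
  refine ⟨hn, hC.2.1.comp hφ, fun i => ?_⟩
  simp only [comp_apply, show i + 2 = i + 1 + 1 by ring]
  by_cases hi : i = 0
  · subst hi
    rwa [zero_add, hstep 1 h1]
  by_cases hi' : i + 1 = 0
  · have hφi : φ i = φ 0 - 1 := eq_sub_of_add_eq (by rw [← hstep i hi, hi'])
    rwa [hi', zero_add, hφi]
  rw [hstep _ hi', hstep i hi, add_assoc, one_add_one_eq_two]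
  exact hC.2.2 (φ i)

lemma exists_shortcut (hC : IsPCCycle col m c) {t : ℕ} (ht : 0 < t) (htm : t + 2 ≤ m)
    (h₁ : col (c 0) (c t) ≠ col (c t) (c (t + 1)))
    (h₂ : col (c (-1)) (c 0) ≠ col (c 0) (c t)) :
    ∃ c' : ZMod (m - t + 1) → V, IsPCCycle col (m - t + 1) c' ∧ c' 0 = c 0 ∧
      range c' ⊆ range c := by
  obtain ⟨φ, hφ, hφ0, hφ1, hstep⟩ := exists_shortcut_index_map ht (by omega : t < m)
  refine ⟨c ∘ φ, hC.comp_of_add_one (by omega) hφ hstep ?_ ?_, by simp [hφ0],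
    range_comp_subset_range φ c⟩
  · rwa [hφ0, hφ1]
  · rwa [hφ0, hφ1, zero_sub]

theorem hasShortPCCycleThrough_zero (hsymm : ∀ u v, col u v = col v u)
    (hC : IsPCCycle col m c) : HasShortPCCycleThrough col (range c) (c 0) := by
  induction m using Nat.strong_induction_on with
  | _ m ih =>
  rcases le_or_gt m 4 with hm | hm
  · exact ⟨m, c, hC, hm, mem_range_self 0, subset_rfl⟩
  have h₀₁ : col (c (-1)) (c 0) ≠ col (c 0) (c 1) := by
    simpa [show (-1 + 2 : ZMod m) = 1 by ring] using hC.2.2 (-1)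
  have h₁₂ : col (c 0) (c 1) ≠ col (c 1) (c 2) := by simpa using hC.2.2 0
  have h₂₃ : col (c 1) (c 2) ≠ col (c 2) (c 3) := by
    simpa [one_add_one_eq_two, show (1 + 2 : ZMod m) = 3 by norm_num] using hC.2.2 1
  have h₃₄ : col (c 2) (c 3) ≠ col (c 3) (c 4) := by
    simpa [show (2 + 1 : ZMod m) = 3 by norm_num, show (2 + 2 : ZMod m) = 4 by norm_num]
      using hC.2.2 2
  have hne (a b : ℕ) (ha : a < 4) (hb : b < 4) (hab : a ≠ b) : c a ≠ c b :=
    hC.natCast_ne (by omega) (by omega) hab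
  have d₀₁ : c 0 ≠ c 1 := by simpa using hne 0 1
  have d₀₂ : c 0 ≠ c 2 := by simpa using hne 0 2
  have d₀₃ : c 0 ≠ c 3 := by simpa using hne 0 3
  have d₁₂ : c 1 ≠ c 2 := by simpa using hne 1 2
  have d₁₃ : c 1 ≠ c 3 := by simpa using hne 1 3
  have d₂₃ : c 2 ≠ c 3 := by simpa using hne 2 3
  have mem (i : ZMod m) : c i ∈ range c := mem_range_self i
  rcases chord_colors_cases (x := col (c 0) (c 2)) (y := col (c 0) (c 3)) h₀₁ h₂₃ h₃₄
    with h | h | h | h | h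
  · exact .of_triangle (mem 0) (mem 1) (mem 2) d₀₁ d₁₂ d₀₂ h₁₂
      (by rw [hsymm (c 2)]; exact h.1) (by rw [hsymm (c 2)]; exact h.2)
  · exact .of_square (mem 0) (mem 1) (mem 2) (mem 3) d₀₁ d₀₂ d₀₃ d₁₂ d₁₃ d₂₃ h₁₂ h₂₃
      (by rw [hsymm (c 3)]; exact h.1) (by rw [hsymm (c 3)]; exact h.2)
  · exact .of_triangle (mem 0) (mem 2) (mem 3) d₀₂ d₂₃ d₀₃ h.1
      (by rw [hsymm (c 3)]; exact h.2.1) (by rw [hsymm (c 3)]; exact h.2.2)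
  · obtain ⟨c', hC', hc'0, hsub⟩ := hC.exists_shortcut (t := 2) two_pos (by omega)
      (by simpa [show (2 + 1 : ZMod m) = 3 by norm_num] using h.1) (by simpa using h.2)
    exact hc'0 ▸ (ih _ (by omega) hC').mono hsub
  · obtain ⟨c', hC', hc'0, hsub⟩ := hC.exists_shortcut (t := 3) three_pos (by omega)
      (by simpa [show (3 + 1 : ZMod m) = 4 by norm_num] using h.1) (by simpa using h.2)
    exact hc'0 ▸ (ih _ (by omega) hC').mono hsub

end IsPCCycle

theorem stmt0_general {V : Type*} (col : V → V → ℕ)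
    (hsymm : ∀ u v, col u v = col v u)
    (m : ℕ) (c : ZMod m → V) (hC : IsPCCycle col m c)
    (v : V) (hv : v ∈ Set.range c) :
    ∃ (m' : ℕ) (c' : ZMod m' → V), IsPCCycle col m' c' ∧ m' ≤ 4 ∧
      v ∈ Set.range c' ∧ Set.range c' ⊆ Set.range c := by
  obtain ⟨k, rfl⟩ := hv
  have h := ((hC.comp_add_right k).hasShortPCCycleThrough_zero hsymm).mono
    (range_subset_iff.2 fun i => mem_range_self (i + k))
  rwa [zero_add] at h

/-- Every vertex on a PC cycle of a colored complete graph lies on a PC cycle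
of length at most 4 whose vertices are among those of the original cycle. -/
theorem stmt0 {V : Type*} [Fintype V] (col : V → V → ℕ)
    (hsymm : ∀ u v, col u v = col v u)
    (m : ℕ) (c : ZMod m → V) (hC : IsPCCycle col m c)
    (v : V) (hv : v ∈ Set.range c) :
    ∃ (m' : ℕ) (c' : ZMod m' → V), IsPCCycle col m' c' ∧ m' ≤ 4 ∧
      v ∈ Set.range c' ∧ Set.range c' ⊆ Set.range c :=
  stmt0_general col hsymm m c hC v hv
end

section
/- Let G be an edge-colored complete graph on n vertices with Δ^mon(G) ≤ n − 2k. If there is a partition of V(G) into two nonempty sets V1, V2 such that only one color appears on all edges between V1 and V2 (a monochromatic edge-cut), then G contains k pairwise vertex-disjoint properly edge-colored cycles of length 4. -/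
/-! Let `a` be the color of the cut `S | Sᶜ`. A vertex `v ∈ S` sees all of `Sᶜ` in color `a`, so
the bound on its `a`-degree leaves it at least `2k - 1` neighbours in `S` joined to it by edges of
other colors. Picking such an edge and deleting its ends costs every other vertex at most two of
these neighbours, so greedily `S`, and likewise `Sᶜ`, contains `k` disjoint such edges. The `j`-th
edges `pq` in `S` and `rs` in `Sᶜ` close the 4-cycle `p q r s`, whose colors alternate between
"not `a`" and `a`, so it is properly colored. -/

open Function

section Matching

variable {V : Type*} [Finite V]

theorem exists_matching_of_two_mul_le_degree (R : V → V → Prop) (k : ℕ) (S : Set V)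
    (hcard : 2 * k ≤ S.ncard)
    (hdeg : ∀ v ∈ S, 2 * k ≤ {u ∈ S | u ≠ v ∧ R v u}.ncard + 1) :
    ∃ p q : Fin k → V, Injective (Sum.elim p q) ∧ ∀ j, p j ∈ S ∧ q j ∈ S ∧ R (p j) (q j) := by
  induction k generalizing S with
  | zero => exact ⟨Fin.elim0, Fin.elim0, injective_of_subsingleton _, (·.elim0)⟩
  | succ k ih =>
    obtain ⟨v, hv⟩ := Set.nonempty_of_ncard_ne_zero (s := S) (by omega)
    obtain ⟨u, huS, huv, hvu⟩ :=
      Set.nonempty_of_ncard_ne_zero (s := {u ∈ S | u ≠ v ∧ R v u}) (by linarith [hdeg v hv])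
    set S' := S \ {v, u}
    have hcard' : 2 * k ≤ S'.ncard := by
      rw [Set.ncard_sdiff (by simp [Set.insert_subset_iff, hv, huS]), Set.ncard_pair huv.symm]
      omega
    have hdeg' : ∀ w ∈ S', 2 * k ≤ {x ∈ S' | x ≠ w ∧ R w x}.ncard + 1 := by
      intro w hw
      have hsub : {x ∈ S' | x ≠ w ∧ R w x} = {x ∈ S | x ≠ w ∧ R w x} \ {v, u} := by
        ext x; simp only [S', Set.mem_ofPred_eq, Set.mem_sdiff]; tauto
      have hdrop := Set.ncard_le_ncard_sdiff_add_ncard {x ∈ S | x ≠ w ∧ R w x} {v, u}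
      rw [← hsub, Set.ncard_pair huv.symm] at hdrop
      linarith [hdeg w hw.1]
    obtain ⟨p, q, hinj, hpq⟩ := ih S' hcard' hdeg'
    refine ⟨Fin.cons v p, Fin.cons u q, ?_, Fin.cases ⟨hv, huS, hvu⟩ fun j => ?_⟩
    · have hp (j : Fin k) : p j ≠ v ∧ p j ≠ u := by simpa [S'] using (hpq j).1.2
      have hq (j : Fin k) : q j ≠ v ∧ q j ≠ u := by simpa [S'] using (hpq j).2.1.2
      simp only [Sum.elim_injective, Fin.cons_injective_iff, Fin.forall_fin_succ, Fin.cons_zero,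
        Fin.cons_succ, Set.mem_range, not_exists] at hinj ⊢
      exact ⟨⟨fun j => (hp j).1, hinj.1⟩, ⟨fun j => (hq j).2, hinj.2.1⟩,
        ⟨huv.symm, fun j => (hq j).1.symm⟩, fun j => ⟨(hp j).2, hinj.2.2 j⟩⟩
    · simpa using ⟨(hpq j).1.1, (hpq j).2.1.1, (hpq j).2.2⟩

end Matching

section Coloring

variable {V : Type*} [Finite V]

theorem monDeg_add_ncard_ne_add_one (col : V → V → ℕ) (v : V) (a : ℕ) :
    monDeg col v a + {u | u ≠ v ∧ col v u ≠ a}.ncard + 1 = Nat.card V := by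
  rw [monDeg, ← Set.ncard_add_ncard_compl {v}, Set.ncard_singleton, add_comm 1,
    ← Set.ncard_inter_add_ncard_sdiff_eq_ncard {v}ᶜ {u | col v u = a}]
  rfl

theorem two_mul_le_ncard_offColor_nbrs_add_one {col : V → V → ℕ} {k a : ℕ} {S : Set V}
    (hS : ∀ x ∈ S, ∀ y ∉ S, col x y = a) {v : V} (hv : v ∈ S)
    (hmon : monDeg col v a + 2 * k ≤ Nat.card V) :
    2 * k ≤ {u ∈ S | u ≠ v ∧ col v u ≠ a}.ncard + 1 := by
  have hnbrs : {u | u ≠ v ∧ col v u ≠ a} = {u ∈ S | u ≠ v ∧ col v u ≠ a} := by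
    ext u
    simp only [Set.mem_ofPred_eq, iff_and_self, and_imp]
    exact fun _ hu => by_contra fun huS => hu (hS v hv u huS)
  have := monDeg_add_ncard_ne_add_one col v a
  rw [hnbrs] at this
  omega

theorem exists_offColor_matching_of_monochromatic_cut {col : V → V → ℕ} {k a : ℕ} {S : Set V}
    (hmon : ∀ v, monDeg col v a + 2 * k ≤ Nat.card V) (hne : S.Nonempty)
    (hS : ∀ x ∈ S, ∀ y ∉ S, col x y = a) :
    ∃ p q : Fin k → V, Injective (Sum.elim p q) ∧
      ∀ j, p j ∈ S ∧ q j ∈ S ∧ col (p j) (q j) ≠ a := by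
  have hdeg v (hv : v ∈ S) := two_mul_le_ncard_offColor_nbrs_add_one hS hv (hmon v)
  obtain ⟨v, hv⟩ := hne
  have hcard : 2 * k ≤ S.ncard := by
    have hsub : {u ∈ S | u ≠ v ∧ col v u ≠ a} ⊆ S \ {v} := fun u hu => ⟨hu.1, hu.2.1⟩
    linarith [hdeg v hv, Set.ncard_le_ncard hsub, Set.ncard_sdiff_singleton_add_one hv]
  exact exists_matching_of_two_mul_le_degree _ k S hcard hdeg

end Coloring

theorem isPCCycle_of_alternating {V : Type*} {col : V → V → ℕ} {a : ℕ} {w x y z : V}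
    (hinj : Injective ![w, x, y, z])
    (hwx : col w x ≠ a) (hxy : col x y = a) (hyz : col y z ≠ a) (hzw : col z w = a) :
    IsPCCycle col 4 ![w, x, y, z] := by
  refine ⟨by norm_num, hinj, fun i => ?_⟩
  fin_cases i
  · exact fun h => hwx (h.trans hxy)
  · exact fun h => hyz (h.symm.trans hxy)
  · exact fun h => hyz (h.trans hzw)
  · exact fun h => hwx (h.symm.trans hzw)

theorem Function.Injective.injective_of_uncurry {ι κ V : Type*} {c : ι → κ → V}
    (h : Injective (uncurry c)) (j : ι) : Injective (c j) :=
  fun _ _ hi => congrArg Prod.snd (@h (j, _) (j, _) hi)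

theorem Function.Injective.disjoint_range_of_uncurry {ι κ V : Type*} {c : ι → κ → V}
    (h : Injective (uncurry c)) {j j' : ι} (hj : j ≠ j') :
    Disjoint (Set.range (c j)) (Set.range (c j')) := by
  rw [Set.disjoint_left]
  rintro _ ⟨i, rfl⟩ ⟨i', hi'⟩
  exact hj (congrArg Prod.fst (@h (j', i') (j, i) hi')).symm

theorem injective_uncurry_vecCons_four {ι V : Type*} {p q r s : ι → V}
    (h : Injective (Sum.elim (Sum.elim p q) (Sum.elim r s))) :
    Injective (uncurry fun j => ![p j, q j, r j, s j]) := by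
  let τ (x : ι × Fin 4) : (ι ⊕ ι) ⊕ (ι ⊕ ι) :=
    ![.inl (.inl x.1), .inl (.inr x.1), .inr (.inl x.1), .inr (.inr x.1)] x.2
  have hτ : Injective τ := by
    rintro ⟨j, i⟩ ⟨j', i'⟩ hji
    fin_cases i <;> fin_cases i' <;> simp_all [τ]
  have hfactor :
      uncurry (fun j => ![p j, q j, r j, s j]) = Sum.elim (Sum.elim p q) (Sum.elim r s) ∘ τ := by
    funext ⟨j, i⟩
    fin_cases i <;> rfl
  exact hfactor ▸ h.comp hτ

/-- If Δ^mon(G) ≤ n − 2k and G has a monochromatic edge-cut, then G has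
k disjoint PC cycles of length 4. -/
theorem stmt4 (n k : ℕ) (col : Fin n → Fin n → ℕ)
    (hsymm : ∀ u v, col u v = col v u)
    (hmon : ∀ v a, monDeg col v a + 2 * k ≤ n)
    (hcut : HasMonochromaticCut col) :
    ∃ c : Fin k → ZMod 4 → Fin n,
      (∀ j, IsPCCycle col 4 (c j)) ∧
      ∀ j j', j ≠ j' → Disjoint (Set.range (c j)) (Set.range (c j')) := by
  obtain ⟨S, hSne, hTne, a, hSa⟩ := hcut
  have hTa : ∀ x ∈ Sᶜ, ∀ y ∉ Sᶜ, col x y = a :=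
    fun x hx y hy => hsymm x y ▸ hSa y (not_not.1 hy) x hx
  have hmon' v : monDeg col v a + 2 * k ≤ Nat.card (Fin n) := by simpa using hmon v a
  obtain ⟨p, q, hpq_inj, hpqS⟩ := exists_offColor_matching_of_monochromatic_cut hmon' hSne hSa
  obtain ⟨r, s, hrs_inj, hrsT⟩ := exists_offColor_matching_of_monochromatic_cut hmon' hTne hTa
  have hsep x y : Sum.elim p q x ≠ Sum.elim r s y := by
    have hx : Sum.elim p q x ∈ S := by cases x <;> simp [hpqS]
    have hy : Sum.elim r s y ∈ Sᶜ := by cases y <;> simp [hrsT]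
    exact fun h => hy (h ▸ hx)
  have hinj := injective_uncurry_vecCons_four (hpq_inj.sumElim hrs_inj hsep)
  refine ⟨fun j => ![p j, q j, r j, s j], fun j => ?_, fun j j' => hinj.disjoint_range_of_uncurry⟩
  obtain ⟨hp, hq, hpq⟩ := hpqS j
  obtain ⟨hr, hs, hrs⟩ := hrsT j
  exact isPCCycle_of_alternating (hinj.injective_of_uncurry j) hpq (hSa _ hq _ hr) hrs
    (hTa _ hs _ (not_not.2 hp))
end

section
/- Let G be an edge-colored complete graph on n ≥ 2 vertices without any monochromatic edge-cut. If there is a vertex v0 not contained in any properly edge-colored cycle of length at most 4, then V(G) admits a partition V0, V1, …, Vp with: (a) v0 ∈ V0, 2 ≤ p ≤ d^c(v0), and all parts nonempty; (b) all edges between V0 and Vi have a single color c_i, with c_i ≠ c_j for i ≠ j; (c) all edges between Vi and Vj (1 ≤ i < j ≤ p) have colors in {c_i, c_j}; (d) all edges inside Vi (1 ≤ i ≤ p) have color c_i. -/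
section Aux
variable {V : Type*} (col : V → V → ℕ) (v0 : V)

lemma pc3aux
    (hv0 : ∀ (m : ℕ) (c : ZMod m → V), IsPCCycle col m c → m ≤ 4 → v0 ∉ Set.range c)
    (u w : V) (hu : u ≠ v0) (hw : w ≠ v0) (huw : u ≠ w)
    (h1 : col v0 u ≠ col u w) (h2 : col u w ≠ col w v0) (h3 : col w v0 ≠ col v0 u) :
    False := by
  set c : ZMod 3 → V := ![v0, u, w] with hc
  have hinj : Function.Injective c := by
    intro a b hab
    fin_cases a <;> fin_cases b <;> simp_all [hc] <;> tauto
  have hpc : IsPCCycle col 3 c := by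
    refine ⟨le_refl _, hinj, ?_⟩
    intro i
    fin_cases i <;> simpa [hc] using by assumption
  exact hv0 3 c hpc (by norm_num) ⟨0, rfl⟩

lemma pc4aux
    (hv0 : ∀ (m : ℕ) (c : ZMod m → V), IsPCCycle col m c → m ≤ 4 → v0 ∉ Set.range c)
    (u w x : V) (hu : u ≠ v0) (hw : w ≠ v0) (hx : x ≠ v0)
    (huw : u ≠ w) (hux : u ≠ x) (hwx : w ≠ x)
    (h1 : col v0 u ≠ col u w) (h2 : col u w ≠ col w x)
    (h3 : col w x ≠ col x v0) (h4 : col x v0 ≠ col v0 u) :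
    False := by
  set c : ZMod 4 → V := fun i => if i = 0 then v0 else if i = 1 then u else if i = 2 then w else x with hc
  have hcases : ∀ i : ZMod 4, i = 0 ∨ i = 1 ∨ i = 2 ∨ i = 3 := by decide
  have hc0 : c 0 = v0 := if_pos rfl
  have hc1 : c 1 = u := by
    show (if (1:ZMod 4) = 0 then v0 else if (1:ZMod 4) = 1 then u else if (1:ZMod 4) = 2 then w else x) = u
    rw [if_neg (by decide), if_pos rfl]
  have hc2 : c 2 = w := by
    show (if (2:ZMod 4) = 0 then v0 else if (2:ZMod 4) = 1 then u else if (2:ZMod 4) = 2 then w else x) = w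
    rw [if_neg (by decide), if_neg (by decide), if_pos rfl]
  have hc3 : c 3 = x := by
    show (if (3:ZMod 4) = 0 then v0 else if (3:ZMod 4) = 1 then u else if (3:ZMod 4) = 2 then w else x) = x
    rw [if_neg (by decide), if_neg (by decide), if_neg (by decide)]
  have hinj : Function.Injective c := by
    intro a b hab
    rcases hcases a with h|h|h|h <;> rcases hcases b with h'|h'|h'|h' <;>
      subst h <;> subst h' <;>
      simp only [hc0, hc1, hc2, hc3] at hab <;>
      first
        | rfl
        | exact absurd hab (by tauto)
  have hpc : IsPCCycle col 4 c := by
    refine ⟨by norm_num, hinj, ?_⟩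
    intro i
    rcases hcases i with h|h|h|h <;> subst h
    · rw [show (0+1 : ZMod 4) = 1 from by decide, show (0+2 : ZMod 4) = 2 from by decide,
        hc0, hc1, hc2]; exact h1
    · rw [show (1+1 : ZMod 4) = 2 from by decide, show (1+2 : ZMod 4) = 3 from by decide,
        hc1, hc2, hc3]; exact h2
    · rw [show (2+1 : ZMod 4) = 3 from by decide, show (2+2 : ZMod 4) = 0 from by decide,
        hc2, hc3, hc0]; exact h3
    · rw [show (3+1 : ZMod 4) = 0 from by decide, show (3+2 : ZMod 4) = 1 from by decide,
        hc3, hc0, hc1]; exact h4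
  exact hv0 4 c hpc (by norm_num) ⟨0, hc0⟩

/-- no PC triangle through v0 -/
lemma L1aux (hsymm : ∀ u v, col u v = col v u)
    (hv0 : ∀ (m : ℕ) (c : ZMod m → V), IsPCCycle col m c → m ≤ 4 → v0 ∉ Set.range c)
    (u w : V) (hu : u ≠ v0) (hw : w ≠ v0) (huw : u ≠ w) (hab : col v0 u ≠ col v0 w) :
    col u w = col v0 u ∨ col u w = col v0 w := by
  by_contra hcon
  push_neg at hcon
  exact pc3aux col v0 hv0 u w hu hw huw hcon.1.symm
    (by rw [hsymm w v0]; exact hcon.2) (by rw [hsymm w v0]; exact hab.symm)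

/-- no PC C4 through v0 -/
lemma L2aux (hsymm : ∀ u v, col u v = col v u)
    (hv0 : ∀ (m : ℕ) (c : ZMod m → V), IsPCCycle col m c → m ≤ 4 → v0 ∉ Set.range c)
    (u w y : V) (hu : u ≠ v0) (hw : w ≠ v0) (hy : y ≠ v0) (huw : u ≠ w)
    (hsame : col v0 w = col v0 u) (hne : col u w ≠ col v0 u)
    (hb : col v0 y ≠ col v0 u) :
    col w y = col v0 y := by
  have huy : u ≠ y := fun h => hb (by rw [h])
  have hwy : w ≠ y := fun h => hb (by rw [← h]; exact hsame)
  have hL1 := L1aux col v0 hsymm hv0 w y hw hy hwy (by rw [hsame]; exact hb.symm)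
  rcases hL1 with h | h
  · exfalso
    refine pc4aux col v0 hv0 u w y hu hw hy huw huy hwy hne.symm ?_ ?_ ?_
    · rw [h, hsame]; exact hne
    · rw [h, hsame, hsymm y v0]; exact hb.symm
    · rw [hsymm y v0]; exact hb
  · exact h

/-- bad vertices see every other class with that class's color -/
lemma L3aux (hsymm : ∀ u v, col u v = col v u)
    (hv0 : ∀ (m : ℕ) (c : ZMod m → V), IsPCCycle col m c → m ≤ 4 → v0 ∉ Set.range c)
    (u y : V) (hu : u ≠ v0) (hy : y ≠ v0)
    (hbad : ∃ w, w ≠ v0 ∧ w ≠ u ∧ col v0 w = col v0 u ∧ col u w ≠ col v0 u)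
    (hb : col v0 y ≠ col v0 u) :
    col u y = col v0 y := by
  obtain ⟨w, hw, hwu, hsame, hne⟩ := hbad
  refine L2aux col v0 hsymm hv0 w u y hw hu hy hwu (by rw [hsame]) ?_ (by rw [hsame]; exact hb)
  rw [hsymm w u, hsame]; exact hne

end Aux

/-- Structure of a colored complete graph without monochromatic edge-cuts
around a vertex lying on no short PC cycle. -/
theorem stmt6 {V : Type*} [Fintype V] (col : V → V → ℕ)
    (hsymm : ∀ u v, col u v = col v u)
    (hcard : 2 ≤ Fintype.card V)
    (hcut : ¬ HasMonochromaticCut col)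
    (v0 : V)
    (hv0 : ∀ (m : ℕ) (c : ZMod m → V), IsPCCycle col m c → m ≤ 4 →
      v0 ∉ Set.range c) :
    ∃ (p : ℕ) (V0 : Set V) (Vs : Fin p → Set V) (cc : Fin p → ℕ),
      2 ≤ p ∧ p ≤ colorDeg col v0 ∧
      v0 ∈ V0 ∧ (∀ i, (Vs i).Nonempty) ∧
      (V0 ∪ ⋃ i, Vs i) = Set.univ ∧
      (∀ i, Disjoint V0 (Vs i)) ∧
      (∀ i j, i ≠ j → Disjoint (Vs i) (Vs j)) ∧
      Function.Injective cc ∧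
      (∀ i, ∀ x ∈ V0, ∀ y ∈ Vs i, col x y = cc i) ∧
      (∀ i j, i ≠ j → ∀ x ∈ Vs i, ∀ y ∈ Vs j,
        col x y = cc i ∨ col x y = cc j) ∧
      (∀ i, ∀ x ∈ Vs i, ∀ y ∈ Vs i, x ≠ y → col x y = cc i) := by
  classical
  have L1 := L1aux col v0 hsymm hv0
  have L3 := L3aux col v0 hsymm hv0
  set Gd : V → Prop := fun u => u ≠ v0 ∧ ∀ w, w ≠ v0 → w ≠ u → col v0 w = col v0 u → col u w = col v0 u with hGd
  have hgoodbad : ∀ u, u ≠ v0 → Gd u ∨ (∃ w, w ≠ v0 ∧ w ≠ u ∧ col v0 w = col v0 u ∧ col u w ≠ col v0 u) := by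
    intro u hu
    by_cases h : ∀ w, w ≠ v0 → w ≠ u → col v0 w = col v0 u → col u w = col v0 u
    · exact Or.inl ⟨hu, h⟩
    · push_neg at h
      obtain ⟨w, h1, h2, h3, h4⟩ := h
      exact Or.inr ⟨w, h1, h2, h3, h4⟩
  have hL4 : ∃ u w : V, u ≠ v0 ∧ w ≠ v0 ∧ col v0 u ≠ col v0 w := by
    by_contra hcon
    push_neg at hcon
    obtain ⟨u1, hu1⟩ := Fintype.exists_ne_of_one_lt_card (by omega) v0
    refine hcut ⟨{v0}, ⟨v0, rfl⟩, ⟨u1, hu1⟩, col v0 u1, ?_⟩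
    rintro x rfl y hy
    exact hcon y u1 hy hu1
  set GoodCol : Set ℕ := {a | ∃ u, Gd u ∧ col v0 u = a} with hGoodCol
  have hGsub : GoodCol ⊆ col v0 '' {u | u ≠ v0} := by
    rintro a ⟨u, hgu, rfl⟩; exact ⟨u, hgu.1, rfl⟩
  have hCfin : (col v0 '' {u : V | u ≠ v0}).Finite := (Set.toFinite _).image _
  have hGfin : GoodCol.Finite := hCfin.subset hGsub
  have htwo : ∃ a b : ℕ, a ∈ GoodCol ∧ b ∈ GoodCol ∧ a ≠ b := by
    by_contra hcon
    push_neg at hcon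
    by_cases hex : ∃ g, Gd g
    · obtain ⟨g, hg⟩ := hex
      have hclass : ∀ z, Gd z → col v0 z = col v0 g := fun z hz =>
        hcon _ _ ⟨z, hz, rfl⟩ ⟨g, hg, rfl⟩
      refine hcut ⟨{z | Gd z ∧ col v0 z = col v0 g}ᶜ, ⟨v0, fun hh => hh.1.1 rfl⟩, ?_, col v0 g, ?_⟩
      · rw [compl_compl]; exact ⟨g, hg, rfl⟩
      · rw [compl_compl]
        rintro z hz y ⟨hgy, hy⟩
        by_cases hzv : z = v0
        · subst hzv; exact hy
        rcases hgoodbad z hzv with hgz | hbz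
        · exact absurd ⟨hgz, hclass z hgz⟩ hz
        · by_cases hza : col v0 z = col v0 g
          · have hzy : z ≠ y := fun h => hz (h ▸ ⟨hgy, hy⟩)
            have h5 := hgy.2 z hzv hzy (by rw [hza, hy])
            rw [hsymm z y, h5, hy]
          · rw [L3 z y hzv hgy.1 hbz (by rw [hy]; exact fun h => hza h.symm), hy]
    · push_neg at hex
      obtain ⟨u, w, hu, hw, hne⟩ := hL4
      have hbu := (hgoodbad u hu).resolve_left (hex u)
      have hbw := (hgoodbad w hw).resolve_left (hex w)
      have h1 := L3 u w hu hw hbu (Ne.symm hne)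
      have h2 := L3 w u hw hu hbw hne
      rw [hsymm u w, h2] at h1
      exact hne h1
  have hp2 : 2 ≤ GoodCol.ncard := by
    obtain ⟨a, b, ha, hb, hab⟩ := htwo
    have := (Set.one_lt_ncard_iff hGfin).mpr ⟨a, b, ha, hb, hab⟩
    omega
  have hple : GoodCol.ncard ≤ colorDeg col v0 := by
    rw [colorDeg]; exact Set.ncard_le_ncard hGsub hCfin
  set p := GoodCol.ncard with hp
  have hscard : hGfin.toFinset.card = p := by
    rw [hp, Set.ncard_eq_toFinset_card GoodCol hGfin]
  set f : Fin p → ℕ := fun i => (hGfin.toFinset.equivFin.symm (Fin.cast hscard.symm i) : ℕ) with hf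
  have hfinj : Function.Injective f := by
    intro i j hij
    have h5 := hGfin.toFinset.equivFin.symm.injective (Subtype.ext hij)
    have h6 := congrArg Fin.val h5
    exact Fin.ext h6
  have hfmem : ∀ i, f i ∈ GoodCol := fun i =>
    hGfin.mem_toFinset.mp (hGfin.toFinset.equivFin.symm (Fin.cast hscard.symm i)).2
  have hfsurj : ∀ a ∈ GoodCol, ∃ i, f i = a := by
    intro a ha
    refine ⟨Fin.cast hscard (hGfin.toFinset.equivFin ⟨a, hGfin.mem_toFinset.mpr ha⟩), ?_⟩
    rw [hf]
    simp
  set Vs : Fin p → Set V := fun i => {u | Gd u ∧ col v0 u = f i} with hVs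
  set Y := ⋃ i, Vs i with hY
  have hsubY : ∀ i, Vs i ⊆ Y := fun i => Set.subset_iUnion Vs i
  refine ⟨p, Yᶜ, Vs, f, hp2, hple, ?_, ?_, ?_, ?_, ?_, hfinj, ?_, ?_, ?_⟩
  · -- v0 ∈ Yᶜ
    intro h
    obtain ⟨i, hi⟩ := Set.mem_iUnion.mp h
    exact hi.1.1 rfl
  · -- nonempty
    intro i
    obtain ⟨u, hgu, hcu⟩ := hfmem i
    exact ⟨u, hgu, hcu⟩
  · exact Set.compl_union_self Y
  · intro i
    rw [Set.disjoint_left]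
    intro z hz hz2
    exact hz (hsubY i hz2)
  · intro i j hij
    rw [Set.disjoint_left]
    intro z hz hz2
    exact hij (hfinj (hz.2.symm.trans hz2.2))
  · -- edges V0 → Vs i
    rintro i x hx y ⟨hgy, hy⟩
    by_cases hxv : x = v0
    · subst hxv; exact hy
    rcases hgoodbad x hxv with hgx | hbx
    · exfalso
      obtain ⟨j, hj⟩ := hfsurj (col v0 x) ⟨x, hgx, rfl⟩
      exact hx (hsubY j ⟨hgx, hj.symm⟩)
    · by_cases hza : col v0 x = f i
      · have hxy : x ≠ y := fun h => hx (hsubY i (h ▸ ⟨hgy, hy⟩))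
        have h5 := hgy.2 x hxv hxy (by rw [hza, hy])
        rw [hsymm x y, h5, hy]
      · rw [L3 x y hxv hgy.1 hbx (by rw [hy]; exact fun h => hza h.symm), hy]
  · -- edges Vs i ↔ Vs j
    rintro i j hij x ⟨hgx, hx⟩ y ⟨hgy, hy⟩
    have hne : col v0 x ≠ col v0 y := by rw [hx, hy]; exact fun h => hij (hfinj h)
    have hxy : x ≠ y := fun h => hne (by rw [h])
    rcases L1 x y hgx.1 hgy.1 hxy hne with h | h
    · exact Or.inl (by rw [h, hx])
    · exact Or.inr (by rw [h, hy])
  · -- edges inside Vs i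
    rintro i x ⟨hgx, hx⟩ y ⟨hgy, hy⟩ hxy
    have h5 := hgx.2 y hgy.1 (Ne.symm hxy) (by rw [hy, hx])
    rw [h5, hx]
end

section
/- Let G be an edge-colored complete graph on n vertices and k ≥ 1 with Δ^mon(G) ≤ n − 3k + 1. Then either G contains k pairwise vertex-disjoint properly edge-colored cycles of length at most 4, or every vertex of G is contained in a properly edge-colored cycle of length 3 or 4. -/
/-!
Suppose some vertex `v` lies on no PC cycle of length 3 or 4, and orient the other vertices by
`u → w` when `col v u ≠ col v w` and `col u w = col v u`. As there is no PC triangle through `v`,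
this is a multipartite tournament whose parts are the colour classes at `v`, and each of its
directed 3- and 4-cycles is a PC cycle. As there is no PC 4-cycle through `v`, a vertex `x` with
an out-neighbour has `col x u = col v x` for all non-in-neighbours `u`, so the bound on `Δ^mon`
makes every in-degree at least `3k - 2`. A multipartite tournament of minimum in-degree `3k - 2`
has `k` disjoint directed 3- or 4-cycles: delete directed triangles while there are any
(in-degrees drop by at most 3); without them, a source component containing a directed 4-cycle
meets only two parts, and there deleting a 4-cycle lowers each in-degree by at most 2.
-/

open Finset Relation

section MultipartiteTournament

variable {V α : Type*} {A : V → V → Prop} {p : V → α} {s t : Finset V}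

/-- `A` orients the complete multipartite graph on `s` whose parts are the fibres of `p`. -/
structure IsMultipartiteTournament (A : V → V → Prop) (p : V → α) (s : Finset V) : Prop where
  asymm : ∀ u w, A u w → ¬ A w u
  part_ne : ∀ u w, A u w → p u ≠ p w
  total : ∀ u ∈ s, ∀ w ∈ s, p u ≠ p w → A u w ∨ A w u

def HasTriangleIn (A : V → V → Prop) (s : Finset V) : Prop :=
  ∃ a ∈ s, ∃ b ∈ s, ∃ c ∈ s, A a b ∧ A b c ∧ A c a

def HasSquareIn (A : V → V → Prop) (s : Finset V) : Prop :=
  ∃ a ∈ s, ∃ b ∈ s, ∃ c ∈ s, ∃ d ∈ s, A a b ∧ A b c ∧ A c d ∧ A d a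

namespace IsMultipartiteTournament

variable (hT : IsMultipartiteTournament A p s)
include hT

lemma mono (hts : t ⊆ s) : IsMultipartiteTournament A p t :=
  ⟨hT.asymm, hT.part_ne, fun u hu w hw => hT.total u (hts hu) w (hts hw)⟩

lemma flip : IsMultipartiteTournament (flip A) p s :=
  ⟨fun u w h h' => hT.asymm u w h' h, fun u w h => (hT.part_ne w u h).symm,
    fun u hu w hw h => (hT.total u hu w hw h).symm⟩

lemma arc_of_transGen (h3 : ¬ HasTriangleIn A s) (h4 : ¬ HasSquareIn A s) {x y : V}
    (hx : x ∈ s) (hxy : TransGen (fun a b => a ∈ s ∧ b ∈ s ∧ A a b) x y) :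
    (p x ≠ p y → A x y) ∧ (p x = p y → ∃ z ∈ s, A x z ∧ A z y) := by
  induction hxy with
  | single h => exact ⟨fun _ => h.2.2, fun hp => (hT.part_ne x _ h.2.2 hp).elim⟩
  | @tail z y _ hzy ih =>
    obtain ⟨hz, hy, hzy⟩ := hzy
    by_cases hxz : p x = p z
    · obtain ⟨w, hw, hxw, hwz⟩ := ih.2 hxz
      have hxy : p x ≠ p y := hxz ▸ hT.part_ne z y hzy
      refine ⟨fun _ => (hT.total x hx y hy hxy).resolve_right fun hyx => ?_,
        fun h => (hxy h).elim⟩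
      exact h4 ⟨x, hx, w, hw, z, hz, y, hy, hxw, hwz, hzy, hyx⟩
    · have hxz := ih.1 hxz
      refine ⟨fun hxy => (hT.total x hx y hy hxy).resolve_right fun hyx => ?_,
        fun _ => ⟨z, hz, hxz, hzy⟩⟩
      exact h3 ⟨x, hx, z, hz, y, hy, hxz, hzy, hyx⟩

lemma hasTriangleIn_or_hasSquareIn [Finite V] (hne : s.Nonempty)
    (hin : ∀ x ∈ s, ∃ y ∈ s, A y x) : HasTriangleIn A s ∨ HasSquareIn A s := by
  by_contra! h
  let R : V → V → Prop := fun a b => a ∈ s ∧ b ∈ s ∧ A a b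
  have : Std.Irrefl (TransGen R) := ⟨fun x hxx => by
    obtain ⟨_, ⟨hx, -⟩, -⟩ := TransGen.head'_iff.1 hxx
    obtain ⟨z, -, hxz, hzx⟩ := (hT.arc_of_transGen h.1 h.2 hx hxx).2 rfl
    exact hT.asymm x z hxz hzx⟩
  obtain ⟨x, hx, hmin⟩ := (Finite.wellFounded_of_trans_of_irrefl (TransGen R)).has_min s hne
  obtain ⟨y, hy, hyx⟩ := hin x hx
  exact hmin y hy (.single ⟨hy, hx, hyx⟩)

end IsMultipartiteTournament

end MultipartiteTournament

section Dicycles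

variable {V : Type*} {A : V → V → Prop} {s t : Finset V} {k : ℕ}

lemma isDicycle_triangle (hA : ∀ u w, A u w → ¬ A w u) {a b c : V}
    (hab : A a b) (hbc : A b c) (hca : A c a) : IsDicycle A 3 ![a, b, c] := by
  have hne : ∀ {u w}, A u w → u ≠ w := fun h huw => hA _ _ h (huw ▸ h)
  refine ⟨by norm_num, ?_, fun i => by fin_cases i <;> assumption⟩
  have hac := (hne hca).symm
  intro i j hij
  fin_cases i <;> fin_cases j <;> first | rfl | simp_all [(hne hab).symm, (hne hbc).symm]

lemma isDicycle_square (hA : ∀ u w, A u w → ¬ A w u) {a b c d : V}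
    (hab : A a b) (hbc : A b c) (hcd : A c d) (hda : A d a) : IsDicycle A 4 ![a, b, c, d] := by
  have hne : ∀ {u w}, A u w → u ≠ w := fun h huw => hA _ _ h (huw ▸ h)
  have hac : a ≠ c := fun h => hA _ _ hab (h ▸ hbc)
  have hbd : b ≠ d := fun h => hA _ _ hbc (h ▸ hcd)
  refine ⟨by norm_num, ?_, fun i => by fin_cases i <;> assumption⟩
  have had := (hne hda).symm
  intro i j hij
  fin_cases i <;> fin_cases j <;>
    first | rfl | simp_all [(hne hab).symm, (hne hbc).symm, (hne hcd).symm, hac.symm, hbd.symm]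

def HasDisjointShortDicyclesIn (A : V → V → Prop) (s : Finset V) (k : ℕ) : Prop :=
  ∃ (m : Fin k → ℕ) (c : ∀ j, ZMod (m j) → V),
    (∀ j, IsDicycle A (m j) (c j) ∧ 3 ≤ m j ∧ m j ≤ 4 ∧ Set.range (c j) ⊆ s) ∧
    ∀ j j', j ≠ j' → Disjoint (Set.range (c j)) (Set.range (c j'))

namespace HasDisjointShortDicyclesIn

lemma zero (s : Finset V) : HasDisjointShortDicyclesIn A s 0 :=
  ⟨Fin.elim0, nofun, nofun, nofun⟩

lemma mono (h : HasDisjointShortDicyclesIn A s k) (hst : s ⊆ t) :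
    HasDisjointShortDicyclesIn A t k :=
  let ⟨m, c, hc, hdisj⟩ := h
  ⟨m, c, fun j => ⟨(hc j).1, (hc j).2.1, (hc j).2.2.1, (hc j).2.2.2.trans (coe_subset.2 hst)⟩,
    hdisj⟩

lemma cons [DecidableEq V] {m₀ : ℕ} {c₀ : ZMod m₀ → V} (hc₀ : IsDicycle A m₀ c₀)
    (hm₀ : 3 ≤ m₀ ∧ m₀ ≤ 4) (hc₀t : Set.range c₀ ⊆ t) (hts : t ⊆ s)
    (h : HasDisjointShortDicyclesIn A (s \ t) k) :
    HasDisjointShortDicyclesIn A s (k + 1) := by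
  obtain ⟨m, c, hc, hdisj⟩ := h
  have hc₀s : ∀ j, Disjoint (Set.range c₀) (Set.range (c j)) := fun j =>
    Set.disjoint_of_subset hc₀t ((hc j).2.2.2.trans (coe_sdiff s t).le) Set.disjoint_sdiff_right
  let M : Fin (k + 1) → ℕ := Fin.cons m₀ m
  refine ⟨M, Fin.cons (α := fun j => ZMod (M j) → V) c₀ c, ?_, ?_⟩
  · refine Fin.cases ⟨hc₀, hm₀.1, hm₀.2, hc₀t.trans (coe_subset.2 hts)⟩ fun j => ?_
    obtain ⟨hcyc, h3, h4, hsub⟩ := hc j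
    exact ⟨hcyc, h3, h4, hsub.trans (coe_subset.2 sdiff_subset)⟩
  · refine Fin.cases (Fin.cases (by simp) fun j' _ => hc₀s j') fun j => Fin.cases
      (fun _ => (hc₀s j).symm) fun j' hjj' => hdisj j j' fun h => hjj' (h ▸ rfl)

lemma cons_triangle [DecidableEq V] (hA : ∀ u w, A u w → ¬ A w u) {a b c : V} (ha : a ∈ s)
    (hb : b ∈ s) (hc : c ∈ s) (hab : A a b) (hbc : A b c) (hca : A c a)
    (h : HasDisjointShortDicyclesIn A (s \ {a, b, c}) k) :
    HasDisjointShortDicyclesIn A s (k + 1) :=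
  h.cons (isDicycle_triangle hA hab hbc hca) (by norm_num)
    (by rintro _ ⟨i, rfl⟩; fin_cases i <;> simp) (by simp [insert_subset_iff, *])

lemma cons_square [DecidableEq V] (hA : ∀ u w, A u w → ¬ A w u) {a b c d : V} (ha : a ∈ s)
    (hb : b ∈ s) (hc : c ∈ s) (hd : d ∈ s) (hab : A a b) (hbc : A b c) (hcd : A c d)
    (hda : A d a)
    (h : HasDisjointShortDicyclesIn A (s \ {a, b, c, d}) k) :
    HasDisjointShortDicyclesIn A s (k + 1) :=
  h.cons (isDicycle_square hA hab hbc hcd hda) (by norm_num)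
    (by rintro _ ⟨i, rfl⟩; fin_cases i <;> simp) (by simp [insert_subset_iff, *])

end HasDisjointShortDicyclesIn

end Dicycles

lemma eq_of_ne_of_ne_of_two_values {α : Type*} {x y z α₁ α₂ : α} (hx : x = α₁ ∨ x = α₂)
    (hy : y = α₁ ∨ y = α₂) (hz : z = α₁ ∨ z = α₂) (hxy : x ≠ y) (hyz : y ≠ z) : x = z := by
  rcases hx with rfl | rfl <;> rcases hy with rfl | rfl <;> rcases hz with rfl | rfl <;> tauto

section InDegree

variable {V : Type*} [DecidableEq V] {A : V → V → Prop} [DecidableRel A] {s t : Finset V}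

lemma minInDeg_sdiff {m r : ℕ} (hm : 0 < m) (hne : s.Nonempty)
    (hdeg : ∀ x ∈ s, m + r ≤ #{y ∈ s | A y x}) (ht : ∀ x ∈ s, #{y ∈ t | A y x} ≤ r) :
    (s \ t).Nonempty ∧ ∀ x ∈ s \ t, m ≤ #{y ∈ s \ t | A y x} := by
  have key : ∀ x ∈ s, m ≤ #{y ∈ s \ t | A y x} := fun x hx => by
    have hsplit : #{y ∈ s | A y x} ≤ #{y ∈ s \ t | A y x} + #{y ∈ t | A y x} :=
      (card_le_card fun y => by simp only [mem_filter, mem_union, mem_sdiff]; tauto).trans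
        (card_union_le _ _)
    have := hdeg x hx
    have := ht x hx
    omega
  obtain ⟨x, hx⟩ := hne
  exact ⟨(card_pos.1 (hm.trans_le (key x hx))).mono (filter_subset _ _),
    fun x hx => key x (mem_sdiff.1 hx).1⟩

lemma IsMultipartiteTournament.card_filter_square_le_two {α : Type*} {p : V → α} {α₁ α₂ : α}
    (hT : IsMultipartiteTournament A p s) (hbip : ∀ x ∈ s, p x = α₁ ∨ p x = α₂)
    {a b c d x : V} (ha : a ∈ s) (hb : b ∈ s) (hc : c ∈ s) (hd : d ∈ s)
    (hab : A a b) (hbc : A b c) (hcd : A c d) (hda : A d a) (hx : x ∈ s) :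
    #{y ∈ {a, b, c, d} | A y x} ≤ 2 := by
  have hpart : ∀ {u w}, A u w → p u ≠ p w := hT.part_ne _ _
  have hac := eq_of_ne_of_ne_of_two_values (hbip a ha) (hbip b hb) (hbip c hc) (hpart hab)
    (hpart hbc)
  have hbd := eq_of_ne_of_ne_of_two_values (hbip b hb) (hbip c hc) (hbip d hd) (hpart hbc)
    (hpart hcd)
  by_cases hxa : p x = p a
  · refine (card_le_card fun y hy => ?_).trans (card_le_two (a := b) (b := d))
    simp only [mem_filter, mem_insert, mem_singleton] at hy ⊢
    obtain ⟨rfl | rfl | rfl | rfl, hyx⟩ := hy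
    exacts [(hpart hyx hxa.symm).elim, .inl rfl, (hpart hyx (hac ▸ hxa).symm).elim, .inr rfl]
  · have hxb :=
      eq_of_ne_of_ne_of_two_values (hbip x hx) (hbip a ha) (hbip b hb) hxa (hpart hab)
    refine (card_le_card fun y hy => ?_).trans (card_le_two (a := a) (b := c))
    simp only [mem_filter, mem_insert, mem_singleton] at hy ⊢
    obtain ⟨rfl | rfl | rfl | rfl, hyx⟩ := hy
    exacts [.inl rfl, (hpart hyx hxb.symm).elim, .inr rfl, (hpart hyx (hbd ▸ hxb).symm).elim]

end InDegree

section TriangleFree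

variable {V α : Type*} {A : V → V → Prop} {p : V → α} {s S : Finset V} {a b c d : V}

/-- A source strong component, as a minimal nonempty subset of `s` closed under in-neighbours. -/
def IsSourceComponent (A : V → V → Prop) (s S : Finset V) : Prop :=
  Minimal (fun T : Finset V => T.Nonempty ∧ T ⊆ s ∧ ∀ y ∈ T, ∀ z ∈ s, A z y → z ∈ T) S

lemma exists_isSourceComponent (hne : s.Nonempty) : ∃ S, IsSourceComponent A s S :=
  exists_minimal_of_wellFoundedLT _ ⟨s, hne, subset_rfl, fun _ _ _ hz _ => hz⟩

namespace IsMultipartiteTournament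

variable (hT : IsMultipartiteTournament A p s) (h3 : ¬ HasTriangleIn A s)
  (ha : a ∈ s) (hb : b ∈ s) (hc : c ∈ s) (hd : d ∈ s)
  (hab : A a b) (hbc : A b c) (hcd : A c d) (hda : A d a)
include hT h3 ha hb hc hd hab hbc hcd hda

lemma part_eq_of_square : p a = p c := by
  by_contra hac
  rcases hT.total a ha c hc hac with h | h
  · exact h3 ⟨a, ha, c, hc, d, hd, h, hcd, hda⟩
  · exact h3 ⟨a, ha, b, hb, c, hc, hab, hbc, h⟩

lemma dominates_or_dominated {u : V} (hu : u ∈ s) (hua : p u ≠ p a) (hub : p u ≠ p b) :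
    (A u a ∧ A u b ∧ A u c ∧ A u d) ∨ (A a u ∧ A b u ∧ A c u ∧ A d u) := by
  have huc : p u ≠ p c := hT.part_eq_of_square h3 ha hb hc hd hab hbc hcd hda ▸ hua
  have hud : p u ≠ p d := hT.part_eq_of_square h3 hb hc hd ha hbc hcd hda hab ▸ hub
  have step : ∀ y ∈ s, ∀ z ∈ s, A y z → p u ≠ p z → A u y → A u z :=
    fun y hy z hz hyz huz huy => (hT.total u hu z hz huz).resolve_right fun hzu =>
      h3 ⟨u, hu, y, hy, z, hz, huy, hyz, hzu⟩
  have back : ∀ y ∈ s, p u ≠ p y → ¬ A u y → A y u := fun y hy huy hn =>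
    (hT.total u hu y hy huy).resolve_left hn
  by_cases hua' : A u a
  · have hub' := step a ha b hb hab hub hua'
    have huc' := step b hb c hc hbc huc hub'
    exact Or.inl ⟨hua', hub', huc', step c hc d hd hcd hud huc'⟩
  · have hud' : ¬ A u d := fun h => hua' (step d hd a ha hda hua h)
    have huc' : ¬ A u c := fun h => hud' (step c hc d hd hcd hud h)
    have hub' : ¬ A u b := fun h => huc' (step b hb c hc hbc huc h)
    exact .inr ⟨back a ha hua hua', back b hb hub hub', back c hc huc huc',
      back d hd hud hud'⟩

lemma dominates_or_arc_of_arc_of_arc {u w y : V} (hu : u ∈ s) (hw : w ∈ s) (hy : y ∈ s)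
    (hdom : A y a ∧ A y b ∧ A y c ∧ A y d) (huw : A u w) (hwy : A w y) :
    (A u a ∧ A u b ∧ A u c ∧ A u d) ∨ A u y := by
  by_cases hpu : p u = p y
  · have hya := hT.part_ne y a hdom.1
    have hyb := hT.part_ne y b hdom.2.1
    refine (hT.dominates_or_dominated h3 ha hb hc hd hab hbc hcd hda hu (hpu ▸ hya)
      (hpu ▸ hyb)).imp_right fun hdom' => ?_
    -- a vertex `x` of the square in another part than `w` closes a directed triangle with `w`
    have key : ∀ x ∈ s, A x u → A y x → p w ≠ p x → False := fun x hx hxu hyx hwx =>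
      (hT.total w hw x hx hwx).elim (fun hwx => h3 ⟨w, hw, x, hx, u, hu, hwx, hxu, huw⟩)
        fun hxw => h3 ⟨x, hx, w, hw, y, hy, hxw, hwy, hyx⟩
    by_cases hwa : p w = p a
    · exact (key b hb hdom'.2.1 hdom.2.1 (hwa ▸ hT.part_ne a b hab)).elim
    · exact (key a ha hdom'.1 hdom.1 hwa).elim
  · exact .inr <| (hT.total u hu y hy hpu).resolve_right fun hyu =>
      h3 ⟨u, hu, w, hw, y, hy, huw, hwy, hyu⟩

end IsMultipartiteTournament

namespace IsSourceComponent

variable (hS : IsSourceComponent A s S) (hT : IsMultipartiteTournament A p s)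
  (h3 : ¬ HasTriangleIn A s) (ha : a ∈ S) (hb : b ∈ S) (hc : c ∈ S) (hd : d ∈ S)
  (hab : A a b) (hbc : A b c) (hcd : A c d) (hda : A d a)
include hS hT h3 ha hb hc hd hab hbc hcd hda

lemma not_dominates {z : V} (hz : z ∈ S) (hdom : A z a ∧ A z b ∧ A z c ∧ A z d) : False := by
  classical
  obtain ⟨-, hSs, hSin⟩ := hS.1
  let D : V → Prop := fun y => y ∈ s ∧ A y a ∧ A y b ∧ A y c ∧ A y d
  -- the dominators of the square and their in-neighbours form an in-closed set, which misses `a`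
  have hST := hS.2 (y := {u ∈ S | D u ∨ ∃ y, D y ∧ A u y})
    ⟨⟨z, mem_filter.2 ⟨hz, Or.inl ⟨hSs hz, hdom⟩⟩⟩, (filter_subset _ _).trans hSs, ?_⟩
    (filter_subset _ _)
  · rcases (mem_filter.1 (hST ha)).2 with ⟨-, haa, -⟩ | ⟨y, hy, hay⟩
    exacts [hT.part_ne a a haa rfl, hT.asymm a y hay hy.2.1]
  · intro u hu w hw hwu
    obtain ⟨hu, hDu⟩ := mem_filter.1 hu
    refine mem_filter.2 ⟨hSin u hu w hw hwu, ?_⟩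
    obtain hDu | ⟨y, hy, huy⟩ := hDu
    · exact Or.inr ⟨u, hDu, hwu⟩
    · exact (hT.dominates_or_arc_of_arc_of_arc h3 (hSs ha) (hSs hb) (hSs hc) (hSs hd) hab hbc
        hcd hda hw (hSs hu) hy.1 hy.2 hwu huy).imp (fun h => ⟨hw, h⟩) fun h => ⟨y, hy, h⟩

lemma not_dominated {z : V} (hz : z ∈ S) (hdom : A a z ∧ A b z ∧ A c z ∧ A d z) : False := by
  classical
  obtain ⟨-, hSs, hSin⟩ := hS.1
  let D : V → Prop := fun y => y ∈ s ∧ A a y ∧ A b y ∧ A c y ∧ A d y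
  -- the vertices of `S` that are neither dominated by the square nor out-neighbours of such a
  -- vertex form an in-closed set, which contains `a`
  have hST := hS.2 (y := {u ∈ S | ¬ (D u ∨ ∃ y, D y ∧ A y u)})
    ⟨⟨a, mem_filter.2 ⟨ha, ?_⟩⟩, (filter_subset _ _).trans hSs, ?_⟩ (filter_subset _ _)
  · exact (mem_filter.1 (hST hz)).2 (Or.inl ⟨hSs hz, hdom⟩)
  · rintro (⟨-, haa, -⟩ | ⟨y, hy, hya⟩)
    exacts [hT.part_ne a a haa rfl, hT.asymm a y hy.2.1 hya]
  · intro u hu w hw hwu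
    obtain ⟨hu, hDu⟩ := mem_filter.1 hu
    refine mem_filter.2 ⟨hSin u hu w hw hwu, fun hDw => hDu ?_⟩
    obtain hDw | ⟨y, hy, hyw⟩ := hDw
    · exact Or.inr ⟨w, hDw, hwu⟩
    · have hflip := hT.flip.dominates_or_arc_of_arc_of_arc
        (fun ⟨x, hx, y, hy, z, hz, hxy, hyz, hzx⟩ => h3 ⟨x, hx, z, hz, y, hy, hzx, hyz, hxy⟩)
        (hSs ha) (hSs hd) (hSs hc) (hSs hb) hda hcd hbc hab (hSs hu) hw hy.1
        ⟨hy.2.1, hy.2.2.2.2, hy.2.2.2.1, hy.2.2.1⟩ hwu hyw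
      exact hflip.imp (fun h => ⟨hSs hu, h.1, h.2.2.2, h.2.2.1, h.2.1⟩) fun h => ⟨y, hy, h⟩

lemma part_eq_or_part_eq {z : V} (hz : z ∈ S) : p z = p a ∨ p z = p b := by
  have hSs := hS.1.2.1
  by_contra! h
  rcases hT.dominates_or_dominated h3 (hSs ha) (hSs hb) (hSs hc) (hSs hd) hab hbc hcd hda
    (hSs hz) h.1 h.2 with hdom | hdom
  exacts [hS.not_dominates hT h3 ha hb hc hd hab hbc hcd hda hz hdom,
    hS.not_dominated hT h3 ha hb hc hd hab hbc hcd hda hz hdom]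

end IsSourceComponent

end TriangleFree

section DisjointCycles

variable {V α : Type*} [Finite V] [DecidableEq V] {A : V → V → Prop} [DecidableRel A]
  {p : V → α} {s : Finset V} {k : ℕ}

namespace IsMultipartiteTournament

variable (hT : IsMultipartiteTournament A p s)
include hT

theorem hasDisjointShortDicyclesIn_of_bipartite {α₁ α₂ : α}
    (hbip : ∀ x ∈ s, p x = α₁ ∨ p x = α₂) (hne : s.Nonempty)
    (hdeg : ∀ x ∈ s, 2 * k + 1 ≤ #{y ∈ s | A y x}) :
    HasDisjointShortDicyclesIn A s (k + 1) := by
  induction k using Nat.strong_induction_on generalizing s with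
  | _ k ih =>
  obtain ⟨a, ha, b, hb, c, hc, hab, hbc, hca⟩ |
      ⟨a, ha, b, hb, c, hc, d, hd, hab, hbc, hcd, hda⟩ :=
    hT.hasTriangleIn_or_hasSquareIn hne fun x hx =>
      filter_nonempty_iff.1 (card_pos.1 (by have := hdeg x hx; omega))
  · exact (hT.part_ne c a hca (eq_of_ne_of_ne_of_two_values (hbip a ha) (hbip b hb)
      (hbip c hc) (hT.part_ne a b hab) (hT.part_ne b c hbc)).symm).elim
  refine .cons_square hT.asymm ha hb hc hd hab hbc hcd hda ?_
  cases k with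
  | zero => exact .zero _
  | succ k =>
    obtain ⟨hne', hdeg'⟩ := minInDeg_sdiff (m := 2 * k + 1) (r := 2) (by omega) hne
      (fun x hx => by have := hdeg x hx; omega) fun x hx =>
        hT.card_filter_square_le_two hbip ha hb hc hd hab hbc hcd hda hx
    exact ih k (by omega) (hT.mono sdiff_subset) (fun x hx => hbip x (sdiff_subset hx)) hne'
      hdeg'

theorem hasDisjointShortDicyclesIn_of_not_hasTriangleIn (h3 : ¬ HasTriangleIn A s)
    (hne : s.Nonempty) (hdeg : ∀ x ∈ s, 2 * k + 1 ≤ #{y ∈ s | A y x}) :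
    HasDisjointShortDicyclesIn A s (k + 1) := by
  obtain ⟨S, hS⟩ := exists_isSourceComponent (A := A) hne
  obtain ⟨hSne, hSs, hSin⟩ := hS.1
  have hdegS : ∀ x ∈ S, 2 * k + 1 ≤ #{y ∈ S | A y x} := fun x hx =>
    (hdeg x (hSs hx)).trans <| card_le_card fun y hy => by
      obtain ⟨hy, hyx⟩ := mem_filter.1 hy
      exact mem_filter.2 ⟨hSin x hx y hy hyx, hyx⟩
  obtain ⟨a, ha, b, hb, c, hc, hab, hbc, hca⟩ |
      ⟨a, ha, b, hb, c, hc, d, hd, hab, hbc, hcd, hda⟩ :=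
    (hT.mono hSs).hasTriangleIn_or_hasSquareIn hSne fun x hx =>
      filter_nonempty_iff.1 (card_pos.1 (by have := hdegS x hx; omega))
  · exact (h3 ⟨a, hSs ha, b, hSs hb, c, hSs hc, hab, hbc, hca⟩).elim
  refine ((hT.mono hSs).hasDisjointShortDicyclesIn_of_bipartite (α₁ := p a) (α₂ := p b)
    (fun z hz => ?_) hSne hdegS).mono hSs
  exact hS.part_eq_or_part_eq hT h3 ha hb hc hd hab hbc hcd hda hz

theorem hasDisjointShortDicyclesIn (hne : s.Nonempty)
    (hdeg : ∀ x ∈ s, 3 * k + 1 ≤ #{y ∈ s | A y x}) :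
    HasDisjointShortDicyclesIn A s (k + 1) := by
  induction k using Nat.strong_induction_on generalizing s with
  | _ k ih =>
  by_cases h3 : HasTriangleIn A s
  · obtain ⟨a, ha, b, hb, c, hc, hab, hbc, hca⟩ := h3
    refine .cons_triangle hT.asymm ha hb hc hab hbc hca ?_
    cases k with
    | zero => exact .zero _
    | succ k =>
      obtain ⟨hne', hdeg'⟩ := minInDeg_sdiff (m := 3 * k + 1) (r := 3) (by omega) hne
        (fun x hx => by have := hdeg x hx; omega) fun x _ =>
          (card_filter_le _ _).trans card_le_three
      exact ih k (by omega) (hT.mono sdiff_subset) hne' hdeg'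
  · exact hT.hasDisjointShortDicyclesIn_of_not_hasTriangleIn h3 hne fun x hx => by
      have := hdeg x hx; omega

end IsMultipartiteTournament

end DisjointCycles

section Coloring

variable {V : Type*} {col : V → V → ℕ} {v : V}

def colorDigraph (col : V → V → ℕ) (v u w : V) : Prop :=
  col v u ≠ col v w ∧ col u w = col v u

instance : DecidableRel (colorDigraph col v) := fun _ _ => inferInstanceAs (Decidable (_ ∧ _))

def IsOnShortPCCycle (col : V → V → ℕ) (v : V) : Prop :=
  ∃ (m : ℕ) (c : ZMod m → V), IsPCCycle col m c ∧ m ≤ 4 ∧ v ∈ Set.range c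

lemma IsDicycle.isPCCycle {m : ℕ} {c : ZMod m → V} (h : IsDicycle (colorDigraph col v) m c)
    (hm : 3 ≤ m) : IsPCCycle col m c := by
  refine ⟨hm, h.2.1, fun i => ?_⟩
  obtain ⟨hne, hcol⟩ := h.2.2 i
  have hcol' := (h.2.2 (i + 1)).2
  rw [add_assoc, one_add_one_eq_two] at hcol'
  rwa [hcol, hcol']

lemma isOnShortPCCycle_of_triangle {u w : V} (hvu : v ≠ u) (huw : u ≠ w) (hvw : v ≠ w)
    (e₁ : col v u ≠ col u w) (e₂ : col u w ≠ col w v) (e₃ : col w v ≠ col v u) :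
    IsOnShortPCCycle col v := by
  refine ⟨3, ![v, u, w], ⟨le_rfl, ?_, fun i => by fin_cases i <;> simpa [eq_comm]⟩, by norm_num,
    0, rfl⟩
  intro i j hij
  fin_cases i <;> fin_cases j <;> first | rfl | simp_all [eq_comm]

lemma isOnShortPCCycle_of_square {u x w : V} (hvu : v ≠ u) (hvx : v ≠ x) (hvw : v ≠ w)
    (hux : u ≠ x) (huw : u ≠ w) (hxw : x ≠ w) (e₁ : col v u ≠ col u x) (e₂ : col u x ≠ col x w)
    (e₃ : col x w ≠ col w v) (e₄ : col w v ≠ col v u) : IsOnShortPCCycle col v := by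
  refine ⟨4, ![v, u, x, w], ⟨by norm_num, ?_, fun i => by fin_cases i <;> simpa [eq_comm]⟩,
    le_rfl, 0, rfl⟩
  intro i j hij
  fin_cases i <;> fin_cases j <;> first | rfl | simp_all [eq_comm]

lemma card_le_monDeg [Finite V] {F : Finset V} {w : V} {a : ℕ}
    (hF : ∀ u ∈ F, u ≠ w ∧ col w u = a) : #F ≤ monDeg col w a :=
  (Set.ncard_coe_finset F).symm.trans_le (Set.ncard_le_ncard hF)

variable (hsymm : ∀ u w, col u w = col w u) (hv : ¬ IsOnShortPCCycle col v)
include hsymm hv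

lemma isMultipartiteTournament_colorDigraph {s : Finset V} (hs : v ∉ s) :
    IsMultipartiteTournament (colorDigraph col v) (col v) s where
  asymm u w h h' := h.1 (by rw [← h.2, hsymm, h'.2])
  part_ne _ _ h := h.1
  total u hu w hw huw := by
    by_contra! h
    have hu : v ≠ u := fun h => hs (h ▸ hu)
    have hw : v ≠ w := fun h => hs (h ▸ hw)
    refine hv (isOnShortPCCycle_of_triangle hu (fun h => huw (h ▸ rfl)) hw ?_ ?_ ?_)
    · exact fun h' => h.1 ⟨huw, h'.symm⟩
    · rw [hsymm w v, hsymm u w]; exact fun h' => h.2 ⟨Ne.symm huw, h'⟩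
    · rw [hsymm w v]; exact Ne.symm huw

lemma col_eq_of_colorDigraph {u x w : V} (hu : u ≠ v) (hx : x ≠ v) (hw : w ≠ v) (hux : u ≠ x)
    (hcol : col v u = col v x) (hxw : colorDigraph col v x w) : col x u = col v x := by
  by_contra h
  have hu' : col v u ≠ col v w := hcol ▸ hxw.1
  refine hv (isOnShortPCCycle_of_square hu.symm hx.symm hw.symm hux (fun h => hu' (h ▸ rfl))
    (fun h => hxw.1 (h ▸ rfl)) ?_ ?_ ?_ ?_)
  · rw [hcol, hsymm u x]; exact Ne.symm h
  · rw [hxw.2, hsymm u x]; exact h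
  · rw [hxw.2, hsymm w v]; exact hxw.1
  · rw [hsymm w v]; exact Ne.symm hu'

lemma exists_card_filter_not_colorDigraph_le [Fintype V] [DecidableEq V] {x : V} (hx : x ≠ v) :
    ∃ w, #{u ∈ univ.erase v | ¬ colorDigraph col v u x} ≤ monDeg col w (col v x) := by
  have hT := isMultipartiteTournament_colorDigraph hsymm hv (notMem_erase v univ)
  set N := {u ∈ univ.erase v | ¬ colorDigraph col v u x}
  have hN : ∀ u ∈ N, u ≠ v ∧ (col v u = col v x ∨ colorDigraph col v x u) := by
    intro u hu
    obtain ⟨hu, hux⟩ := mem_filter.1 hu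
    refine ⟨ne_of_mem_erase hu, or_iff_not_imp_left.2 fun h => ?_⟩
    exact (hT.total x (mem_erase.2 ⟨hx, mem_univ x⟩) u hu (Ne.symm h)).resolve_right hux
  by_cases hout : ∃ w ≠ v, colorDigraph col v x w
  · obtain ⟨w, hw, hxw⟩ := hout
    have hxN : x ∈ N :=
      mem_filter.2 ⟨mem_erase.2 ⟨hx, mem_univ x⟩, fun h => hT.part_ne x x h rfl⟩
    have hvN : v ∉ N.erase x := fun h => (hN v (mem_of_mem_erase h)).1 rfl
    refine ⟨x, (card_erase_add_one hxN).symm.trans_le ?_⟩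
    rw [← card_insert_of_notMem hvN]
    refine card_le_monDeg fun u hu => ?_
    obtain rfl | hu := mem_insert.1 hu
    · exact ⟨hx.symm, hsymm x u⟩
    obtain ⟨hux, huN⟩ := mem_erase.1 hu
    obtain ⟨huv, h | h⟩ := hN u huN
    exacts [⟨hux, col_eq_of_colorDigraph hsymm hv huv hx hw hux h hxw⟩, ⟨hux, h.2⟩]
  · push Not at hout
    refine ⟨v, card_le_monDeg fun u hu => ?_⟩
    obtain ⟨huv, h | h⟩ := hN u hu
    exacts [⟨huv, h⟩, (hout u huv h).elim]

end Coloring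

theorem stmt7_general (n k : ℕ) (col : Fin n → Fin n → ℕ)
    (hsymm : ∀ u v, col u v = col v u)
    (hmon : ∀ v a, monDeg col v a + 3 * k ≤ n + 1) :
    HasKDisjointShortPCCycles col k ∨
      ∀ v : Fin n, ∃ (m : ℕ) (c : ZMod m → Fin n),
        IsPCCycle col m c ∧ m ≤ 4 ∧ v ∈ Set.range c := by
  rcases k with _ | k
  · exact .inl ⟨Fin.elim0, nofun, nofun, nofun⟩
  refine or_iff_not_imp_right.2 fun hall => ?_
  obtain ⟨v, hv⟩ := not_forall.1 hall
  have hT := isMultipartiteTournament_colorDigraph hsymm hv (notMem_erase v univ)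
  have hs : #(univ.erase v) + 1 = n := (card_erase_add_one (mem_univ v)).trans (card_fin n)
  have hne : (univ.erase v).Nonempty := card_pos.1 (by have := hmon v 0; omega)
  have hdeg : ∀ x ∈ univ.erase v, 3 * k + 1 ≤ #{y ∈ univ.erase v | colorDigraph col v y x} :=
      fun x hx => by
    obtain ⟨w, hw⟩ := exists_card_filter_not_colorDigraph_le hsymm hv (ne_of_mem_erase hx)
    have := card_filter_add_card_filter_not (s := univ.erase v) (colorDigraph col v · x)
    have := hmon w (col v x)
    omega
  obtain ⟨m, c, hc, hdisj⟩ := hT.hasDisjointShortDicyclesIn hne hdeg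
  exact ⟨m, c, fun j => ⟨(hc j).1.isPCCycle (hc j).2.1, (hc j).2.2.1⟩, hdisj⟩

/-- If Δ^mon(G) ≤ n − 3k + 1, then either G contains k disjoint short PC
cycles, or every vertex lies on a PC cycle of length 3 or 4. -/
theorem stmt7 (n k : ℕ) (hk : 1 ≤ k) (col : Fin n → Fin n → ℕ)
    (hsymm : ∀ u v, col u v = col v u)
    (hmon : ∀ v a, monDeg col v a + 3 * k ≤ n + 1) :
    HasKDisjointShortPCCycles col k ∨
      ∀ v : Fin n, ∃ (m : ℕ) (c : ZMod m → Fin n),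
        IsPCCycle col m c ∧ m ≤ 4 ∧ v ∈ Set.range c :=
  stmt7_general n k col hsymm hmon
end

section
/- Let G be an edge-colored complete graph on n vertices with Δ^mon(G) ≤ n − 2k, and suppose G admits a Gallai partition. Then either G contains k pairwise vertex-disjoint properly edge-colored cycles of length at most 4, or every vertex of G is contained in a properly edge-colored cycle of length 3 or 4. -/
lemma mkC4 {V : Type*} (col : V → V → ℕ) (p q r s : V)
    (hpq : p ≠ q) (hpr : p ≠ r) (hps : p ≠ s) (hqr : q ≠ r) (hqs : q ≠ s) (hrs : r ≠ s)
    (e1 : col p q ≠ col q r) (e2 : col q r ≠ col r s)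
    (e3 : col r s ≠ col s p) (e4 : col s p ≠ col p q) :
    ∃ c : ZMod 4 → V, IsPCCycle col 4 c ∧ Set.range c = {p, q, r, s} := by
  classical
  refine ⟨fun i => [p, q, r, s].getD (ZMod.val i) p, ?_⟩
  set c : ZMod 4 → V := fun i => [p, q, r, s].getD (ZMod.val i) p with hc
  have v0 : c 0 = p := rfl
  have v1 : c 1 = q := rfl
  have v2 : c 2 = r := rfl
  have v3 : c 3 = s := rfl
  have helem : ∀ i : ZMod 4, i = 0 ∨ i = 1 ∨ i = 2 ∨ i = 3 := by decide
  refine ⟨⟨by norm_num, ?_, ?_⟩, ?_⟩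
  · intro x y h
    rcases helem x with hx | hx | hx | hx <;> rcases helem y with hy | hy | hy | hy <;>
        subst hx <;> subst hy <;> simp only [v0, v1, v2, v3] at h <;>
      first
      | rfl
      | exact absurd h hpq | exact absurd h hpr | exact absurd h hps
      | exact absurd h hqr | exact absurd h hqs | exact absurd h hrs
      | exact absurd h.symm hpq | exact absurd h.symm hpr | exact absurd h.symm hps
      | exact absurd h.symm hqr | exact absurd h.symm hqs | exact absurd h.symm hrs
  · intro i
    rcases helem i with hi | hi | hi | hi <;> subst hi
    · rw [show (0 : ZMod 4) + 1 = 1 by decide, show (0 : ZMod 4) + 2 = 2 by decide, v0, v1, v2]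
      exact e1
    · rw [show (1 : ZMod 4) + 1 = 2 by decide, show (1 : ZMod 4) + 2 = 3 by decide, v1, v2, v3]
      exact e2
    · rw [show (2 : ZMod 4) + 1 = 3 by decide, show (2 : ZMod 4) + 2 = 0 by decide, v2, v3, v0]
      exact e3
    · rw [show (3 : ZMod 4) + 1 = 0 by decide, show (3 : ZMod 4) + 2 = 1 by decide, v3, v0, v1]
      exact e4
  · ext x
    simp only [Set.mem_range, Set.mem_insert_iff, Set.mem_singleton_iff]
    constructor
    · rintro ⟨i, rfl⟩
      rcases helem i with hi | hi | hi | hi <;> subst hi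
      · exact Or.inl v0
      · exact Or.inr (Or.inl v1)
      · exact Or.inr (Or.inr (Or.inl v2))
      · exact Or.inr (Or.inr (Or.inr v3))
    · rintro (h | h | h | h)
      · exact ⟨0, by rw [v0, h]⟩
      · exact ⟨1, by rw [v1, h]⟩
      · exact ⟨2, by rw [v2, h]⟩
      · exact ⟨3, by rw [v3, h]⟩
section
variable {n : ℕ} {col : Fin n → Fin n → ℕ} {a b : ℕ}

lemma exists_c4_bip (hsymm : ∀ u v, col u v = col v u) (hab : a ≠ b) (A B : Set (Fin n))
    (harc : ∀ z ∈ A, ∀ w ∈ B, col z w = a ∨ col z w = b)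
    (hA : ∀ z ∈ A, 1 ≤ ({w | w ∈ B ∧ col z w = b}).ncard)
    (hB : ∀ w ∈ B, 1 ≤ ({z | z ∈ A ∧ col w z = a}).ncard)
    (hAne : A.Nonempty) :
    ∃ z w z' w', z ∈ A ∧ z' ∈ A ∧ w ∈ B ∧ w' ∈ B ∧ z ≠ z' ∧ w ≠ w' ∧
      col z w = b ∧ col w z' = a ∧ col z' w' = b ∧ col w' z = a := by
  classical
  rcases Classical.em (∀ z ∈ A, ∀ z' ∈ A,
      {w | w ∈ B ∧ col z w = b} ⊆ {w | w ∈ B ∧ col z' w = b} ∨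
      {w | w ∈ B ∧ col z' w = b} ⊆ {w | w ∈ B ∧ col z w = b}) with hcomp | hncomp
  · exfalso
    obtain ⟨zs, hzs, hmin⟩ := Set.exists_min_image A
      (fun z => ({w | w ∈ B ∧ col z w = b}).ncard) A.toFinite hAne
    have hsub : ∀ z ∈ A, {w | w ∈ B ∧ col zs w = b} ⊆ {w | w ∈ B ∧ col z w = b} := by
      intro z hz
      rcases hcomp zs hzs z hz with h | h
      · exact h
      · have heq : {w | w ∈ B ∧ col z w = b} = {w | w ∈ B ∧ col zs w = b} :=
          Set.eq_of_subset_of_ncard_le h (hmin z hz) (Set.toFinite _)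
        rw [heq]
    have hnsne : ({w | w ∈ B ∧ col zs w = b}).Nonempty := by
      apply Set.nonempty_of_ncard_ne_zero
      have := hA zs hzs
      omega
    obtain ⟨ws, hwsB, hwsb⟩ := hnsne
    have h1 : ({z | z ∈ A ∧ col ws z = a}).Nonempty := by
      apply Set.nonempty_of_ncard_ne_zero
      have := hB ws hwsB
      omega
    obtain ⟨z1, hz1A, hz1a⟩ := h1
    have hmem : ws ∈ {w | w ∈ B ∧ col z1 w = b} := hsub z1 hz1A ⟨hwsB, hwsb⟩
    have hb : col z1 ws = b := hmem.2
    rw [hsymm] at hb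
    exact hab (hz1a.symm.trans hb)
  · push_neg at hncomp
    obtain ⟨z, hz, z', hz', hcon⟩ := hncomp
    obtain ⟨h1, h2⟩ := hcon
    obtain ⟨w, hwN, hwN'⟩ := Set.not_subset.mp h1
    obtain ⟨w', hw'N', hw'N⟩ := Set.not_subset.mp h2
    have hwB : w ∈ B := hwN.1
    have hw'B : w' ∈ B := hw'N'.1
    have hzw : col z w = b := hwN.2
    have hz'w' : col z' w' = b := hw'N'.2
    have hwz' : col w z' = a := by
      have hnb : ¬ col z' w = b := fun h => hwN' ⟨hwB, h⟩
      rcases harc z' hz' w hwB with h | h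
      · rw [hsymm]; exact h
      · exact absurd h hnb
    have hw'z : col w' z = a := by
      have hnb : ¬ col z w' = b := fun h => hw'N ⟨hw'B, h⟩
      rcases harc z hz w' hw'B with h | h
      · rw [hsymm]; exact h
      · exact absurd h hnb
    have hzz' : z ≠ z' := by
      rintro rfl
      exact hwN' hwN
    have hww' : w ≠ w' := by
      rintro rfl
      exact hw'N hwN
    exact ⟨z, w, z', w', hz, hz', hwB, hw'B, hzz', hww', hzw, hwz', hz'w', hw'z⟩

lemma bip_cycles (hsymm : ∀ u v, col u v = col v u) (hab : a ≠ b) :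
    ∀ (k : ℕ) (A B : Set (Fin n)), Disjoint A B →
    (∀ z ∈ A, ∀ w ∈ B, col z w = a ∨ col z w = b) →
    (∀ z ∈ A, 2 * k ≤ ({w | w ∈ B ∧ col z w = b}).ncard + 1) →
    (∀ w ∈ B, 2 * k ≤ ({z | z ∈ A ∧ col w z = a}).ncard + 1) →
    (1 ≤ k → A.Nonempty) →
    ∃ z w z' w' : Fin k → Fin n,
      (∀ j, z j ∈ A ∧ z' j ∈ A ∧ w j ∈ B ∧ w' j ∈ B ∧ z j ≠ z' j ∧ w j ≠ w' j ∧
        col (z j) (w j) = b ∧ col (w j) (z' j) = a ∧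
        col (z' j) (w' j) = b ∧ col (w' j) (z j) = a) ∧
      (∀ j j' : Fin k, j ≠ j' →
        ∀ x, (x = z j ∨ x = w j ∨ x = z' j ∨ x = w' j) →
          x ≠ z j' ∧ x ≠ w j' ∧ x ≠ z' j' ∧ x ≠ w' j') := by
  intro k
  induction k with
  | zero =>
    intro A B _ _ _ _ _
    exact ⟨Fin.elim0, Fin.elim0, Fin.elim0, Fin.elim0, fun j => j.elim0, fun j => j.elim0⟩
  | succ k ih =>
    intro A B hAB harc hA hB hAne
    obtain ⟨z0, w0, z0', w0', hz0, hz0', hw0, hw0', hzz0, hww0, hc1, hc2, hc3, hc4⟩ :=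
      exists_c4_bip hsymm hab A B harc
        (fun z hz => by have := hA z hz; omega)
        (fun w hw => by have := hB w hw; omega)
        (hAne (by omega))
    have hcard2 : ∀ (S : Set (Fin n)) (u u' : Fin n), S.ncard ≤ (S \ {u, u'}).ncard + 2 := by
      intro S u u'
      have h1 : S ⊆ (S \ {u, u'}) ∪ {u, u'} := by
        intro x hx
        by_cases h : x ∈ ({u, u'} : Set (Fin n))
        · exact Or.inr h
        · exact Or.inl ⟨hx, h⟩
      calc S.ncard ≤ ((S \ {u, u'}) ∪ {u, u'}).ncard := Set.ncard_le_ncard h1 (Set.toFinite _)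
        _ ≤ (S \ {u, u'}).ncard + ({u, u'} : Set (Fin n)).ncard := Set.ncard_union_le _ _
        _ ≤ (S \ {u, u'}).ncard + 2 := by
            have h4 := Set.ncard_insert_le u ({u'} : Set (Fin n))
            have h2 := Set.ncard_singleton (α := Fin n) u'
            omega
    have hA'deg : ∀ z ∈ A \ {z0, z0'}, 2 * k ≤ ({w | w ∈ B \ {w0, w0'} ∧ col z w = b}).ncard + 1 := by
      intro z hz
      have h0 := hA z hz.1
      have hsub : {w | w ∈ B ∧ col z w = b} \ {w0, w0'} ⊆ {w | w ∈ B \ {w0, w0'} ∧ col z w = b} := by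
        rintro w ⟨⟨hwB, hwcol⟩, hwne⟩
        exact ⟨⟨hwB, hwne⟩, hwcol⟩
      have h2 := hcard2 {w | w ∈ B ∧ col z w = b} w0 w0'
      have h3 := Set.ncard_le_ncard hsub (Set.toFinite _)
      omega
    have hB'deg : ∀ w ∈ B \ {w0, w0'}, 2 * k ≤ ({z | z ∈ A \ {z0, z0'} ∧ col w z = a}).ncard + 1 := by
      intro w hw
      have h0 := hB w hw.1
      have hsub : {z | z ∈ A ∧ col w z = a} \ {z0, z0'} ⊆ {z | z ∈ A \ {z0, z0'} ∧ col w z = a} := by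
        rintro z ⟨⟨hzA, hzcol⟩, hzne⟩
        exact ⟨⟨hzA, hzne⟩, hzcol⟩
      have h2 := hcard2 {z | z ∈ A ∧ col w z = a} z0 z0'
      have h3 := Set.ncard_le_ncard hsub (Set.toFinite _)
      omega
    have hA'ne : 1 ≤ k → (A \ {z0, z0'}).Nonempty := by
      intro hk
      have h1 : 2 * (k + 1) ≤ ({z | z ∈ A ∧ col w0 z = a}).ncard + 1 := hB w0 hw0
      have h2 : ({z | z ∈ A ∧ col w0 z = a}).ncard ≤ A.ncard :=
        Set.ncard_le_ncard (fun z hz => hz.1) (Set.toFinite _)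
      have h3 := hcard2 A z0 z0'
      apply Set.nonempty_of_ncard_ne_zero
      omega
    obtain ⟨zr, wr, zr', wr', hall, hdisj⟩ :=
      ih (A \ {z0, z0'}) (B \ {w0, w0'}) (hAB.mono Set.diff_subset Set.diff_subset)
        (fun z hz w hw => harc z hz.1 w hw.1) hA'deg hB'deg hA'ne
    have hsubA : (A \ {z0, z0'} : Set (Fin n)) ⊆ A := Set.diff_subset
    have hsubB : (B \ {w0, w0'} : Set (Fin n)) ⊆ B := Set.diff_subset
    have hAnotB : ∀ x ∈ A, ∀ y ∈ B, x ≠ y := by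
      intro x hx y hy h
      exact (Set.disjoint_left.mp hAB hx) (h ▸ hy)
    have hfacts : ∀ i : Fin k,
        (zr i ≠ z0 ∧ zr i ≠ z0' ∧ zr' i ≠ z0 ∧ zr' i ≠ z0' ∧
         wr i ≠ w0 ∧ wr i ≠ w0' ∧ wr' i ≠ w0 ∧ wr' i ≠ w0') := by
      intro i
      obtain ⟨hz, hz', hw, hw', _⟩ := hall i
      have h1 := hz.2; have h2 := hz'.2; have h3 := hw.2; have h4 := hw'.2
      simp only [Set.mem_insert_iff, Set.mem_singleton_iff, not_or] at h1 h2 h3 h4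
      exact ⟨h1.1, h1.2, h2.1, h2.2, h3.1, h3.2, h4.1, h4.2⟩
    have hmemA : ∀ i : Fin k, zr i ∈ A ∧ zr' i ∈ A ∧ wr i ∈ B ∧ wr' i ∈ B := by
      intro i
      obtain ⟨hz, hz', hw, hw', _⟩ := hall i
      exact ⟨hsubA hz, hsubA hz', hsubB hw, hsubB hw'⟩
    have hkey : ∀ (i : Fin k) (x : Fin n), (x = z0 ∨ x = w0 ∨ x = z0' ∨ x = w0') →
        x ≠ zr i ∧ x ≠ wr i ∧ x ≠ zr' i ∧ x ≠ wr' i := by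
      intro i x hx
      obtain ⟨hf1, hf2, hf3, hf4, hf5, hf6, hf7, hf8⟩ := hfacts i
      obtain ⟨hm1, hm2, hm3, hm4⟩ := hmemA i
      rcases hx with rfl | rfl | rfl | rfl
      · exact ⟨fun h => hf1 h.symm, hAnotB _ hz0 _ hm3, fun h => hf3 h.symm, hAnotB _ hz0 _ hm4⟩
      · exact ⟨fun h => (hAnotB _ hm1 _ hw0) h.symm, fun h => hf5 h.symm,
          fun h => (hAnotB _ hm2 _ hw0) h.symm, fun h => hf7 h.symm⟩
      · exact ⟨fun h => hf2 h.symm, hAnotB _ hz0' _ hm3, fun h => hf4 h.symm, hAnotB _ hz0' _ hm4⟩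
      · exact ⟨fun h => (hAnotB _ hm1 _ hw0') h.symm, fun h => hf6 h.symm,
          fun h => (hAnotB _ hm2 _ hw0') h.symm, fun h => hf8 h.symm⟩
    have hkey2 : ∀ (i : Fin k) (x : Fin n), (x = zr i ∨ x = wr i ∨ x = zr' i ∨ x = wr' i) →
        x ≠ z0 ∧ x ≠ w0 ∧ x ≠ z0' ∧ x ≠ w0' := by
      intro i x hx
      obtain ⟨hf1, hf2, hf3, hf4, hf5, hf6, hf7, hf8⟩ := hfacts i
      obtain ⟨hm1, hm2, hm3, hm4⟩ := hmemA i
      rcases hx with rfl | rfl | rfl | rfl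
      · exact ⟨hf1, hAnotB _ hm1 _ hw0, hf2, hAnotB _ hm1 _ hw0'⟩
      · exact ⟨fun h => (hAnotB _ hz0 _ hm3) h.symm, hf5,
          fun h => (hAnotB _ hz0' _ hm3) h.symm, hf6⟩
      · exact ⟨hf3, hAnotB _ hm2 _ hw0, hf4, hAnotB _ hm2 _ hw0'⟩
      · exact ⟨fun h => (hAnotB _ hz0 _ hm4) h.symm, hf7,
          fun h => (hAnotB _ hz0' _ hm4) h.symm, hf8⟩
    refine ⟨Fin.cons z0 zr, Fin.cons w0 wr, Fin.cons z0' zr', Fin.cons w0' wr', ?_, ?_⟩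
    · intro j
      rcases Fin.eq_zero_or_eq_succ j with rfl | ⟨i, rfl⟩
      · simp only [Fin.cons_zero]
        exact ⟨hz0, hz0', hw0, hw0', hzz0, hww0, hc1, hc2, hc3, hc4⟩
      · simp only [Fin.cons_succ]
        obtain ⟨hz, hz', hw, hw', hrest⟩ := hall i
        obtain ⟨hm1, hm2, hm3, hm4⟩ := hmemA i
        exact ⟨hm1, hm2, hm3, hm4, hrest⟩
    · intro j j' hjj' x hx
      rcases Fin.eq_zero_or_eq_succ j with rfl | ⟨i, rfl⟩ <;>
        rcases Fin.eq_zero_or_eq_succ j' with rfl | ⟨i', rfl⟩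
      · exact absurd rfl hjj'
      · simp only [Fin.cons_zero] at hx
        simp only [Fin.cons_succ]
        exact hkey i' x hx
      · simp only [Fin.cons_succ] at hx
        simp only [Fin.cons_zero]
        exact hkey2 i x hx
      · simp only [Fin.cons_succ] at hx ⊢
        exact hdisj i i' (fun h => hjj' (by rw [h])) x hx

end

lemma ncard_ne_deg {n : ℕ} {col : Fin n → Fin n → ℕ} {k : ℕ}
    (hmon : ∀ (v : Fin n) (a : ℕ), monDeg col v a + 2 * k ≤ n) (z : Fin n) (c0 : ℕ) :
    2 * k ≤ ({u | u ≠ z ∧ col z u ≠ c0}).ncard + 1 := by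
  classical
  have hm := hmon z c0
  have hmd : monDeg col z c0 = ({u | u ≠ z ∧ col z u = c0}).ncard := rfl
  have hU : {u | u ≠ z ∧ col z u = c0} ∪ {u | u ≠ z ∧ col z u ≠ c0} = ({z} : Set (Fin n))ᶜ := by
    ext u
    simp only [Set.mem_union, Set.mem_setOf_eq, Set.mem_compl_iff, Set.mem_singleton_iff]
    constructor
    · rintro (⟨h, _⟩ | ⟨h, _⟩) <;> exact h
    · intro h
      by_cases hc : col z u = c0
      · exact Or.inl ⟨h, hc⟩
      · exact Or.inr ⟨h, hc⟩
  have hdis : Disjoint {u | u ≠ z ∧ col z u = c0} {u | u ≠ z ∧ col z u ≠ c0} := by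
    rw [Set.disjoint_left]
    rintro u ⟨_, h2⟩ ⟨_, h4⟩
    exact h4 h2
  have hsum := Set.ncard_union_eq hdis (Set.toFinite _) (Set.toFinite _)
  rw [hU] at hsum
  have hcompl := Set.ncard_add_ncard_compl ({z} : Set (Fin n)) (Set.toFinite _)
  have hsing : ({z} : Set (Fin n)).ncard = 1 := Set.ncard_singleton z
  have hcard : Nat.card (Fin n) = n := by simp
  rw [hsing, hcard] at hcompl
  omega
/-- If Δ^mon(G) ≤ n − 2k and G has a Gallai partition, then either G has k
disjoint short PC cycles, or every vertex lies on a PC cycle of length 3 or 4. -/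
theorem stmt8 (n k : ℕ) (col : Fin n → Fin n → ℕ)
    (hsymm : ∀ u v, col u v = col v u)
    (hmon : ∀ v a, monDeg col v a + 2 * k ≤ n)
    (hGallai : HasGallaiPartition col) :
    HasKDisjointShortPCCycles col k ∨
      ∀ v : Fin n, ∃ (m : ℕ) (c : ZMod m → Fin n),
        IsPCCycle col m c ∧ m ≤ 4 ∧ v ∈ Set.range c := by
  classical
  by_cases hL : HasKDisjointShortPCCycles col k
  · exact Or.inl hL
  right
  rcases Nat.eq_zero_or_pos k with hk0 | hk1
  · exfalso
    apply hL
    subst hk0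
    exact ⟨Fin.elim0, fun j => j.elim0, fun j => j.elim0, fun j _ _ => j.elim0⟩
  intro v
  by_contra hv
  -- no PC C4 through v of shape (v, x, y, z)
  have hnc4 : ∀ x y z : Fin n,
      v ≠ x → v ≠ y → v ≠ z → x ≠ y → x ≠ z → y ≠ z →
      col v x ≠ col x y → col x y ≠ col y z → col y z ≠ col z v → col z v ≠ col v x → False := by
    intro x y z h1 h2 h3 h4 h5 h6 e1 e2 e3 e4
    obtain ⟨c, hc, hrange⟩ := mkC4 col v x y z h1 h2 h3 h4 h5 h6 e1 e2 e3 e4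
    exact hv ⟨4, c, hc, by norm_num, by rw [hrange]; exact Set.mem_insert _ _⟩
  have hdeg : ∀ (z : Fin n) (c0 : ℕ), 2 * k ≤ ({u | u ≠ z ∧ col z u ≠ c0}).ncard + 1 :=
    ncard_ne_deg hmon
  have hdegne : ∀ (z : Fin n) (c0 : ℕ), ∃ u, u ≠ z ∧ col z u ≠ c0 := by
    intro z c0
    have h := hdeg z c0
    have : ({u | u ≠ z ∧ col z u ≠ c0}).Nonempty :=
      Set.nonempty_of_ncard_ne_zero (by omega)
    obtain ⟨u, hu⟩ := this
    exact ⟨u, hu⟩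
  obtain ⟨q, U, hq2, hUne, hUdisj, hUcover, hpair, apair, bpair, hcross⟩ := hGallai
  have hpartof : ∀ u : Fin n, ∃ j, u ∈ U j := by
    intro u
    have : u ∈ ⋃ i, U i := by rw [hUcover]; trivial
    exact Set.mem_iUnion.mp this
  obtain ⟨i0, hvU⟩ := hpartof v
  have hnotin : ∀ u : Fin n, u ∉ U i0 → ∃ j, u ∈ U j ∧ j ≠ i0 := by
    intro u hu
    obtain ⟨j, hj⟩ := hpartof u
    exact ⟨j, hj, fun h => hu (h ▸ hj)⟩
  have hsame : ∀ (j j' : Fin q), j ≠ j' → ∀ u ∈ U j, ∀ x ∈ U j', ∀ x' ∈ U j',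
      col u x = col u x' := by
    intro j j' hne u hu x hx x' hx'
    obtain ⟨cc, hcc⟩ := hpair j j' hne
    rw [hcc u hu x hx, hcc u hu x' hx']
  have hconstU : ∀ z, z ∉ U i0 → ∀ x, x ∈ U i0 → col z x = col z v := by
    intro z hz x hx
    obtain ⟨j, hj, hjne⟩ := hnotin z hz
    exact hsame j i0 hjne z hj x hx v hvU
  have hcrossv : ∀ u, u ∉ U i0 → col v u = apair ∨ col v u = bpair := by
    intro u hu
    obtain ⟨j, hj, hjne⟩ := hnotin u hu
    exact hcross i0 j (fun h => hjne h.symm) v hvU u hj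
  -- the case of a uniform crossing color is impossible
  have huniform : ∀ c0 : ℕ, (∀ u, u ∉ U i0 → col v u = c0) → False := by
    intro c0 hall
    obtain ⟨x, hxv, hxc⟩ := hdegne v c0
    have hxU : x ∈ U i0 := by
      by_contra h
      exact hxc (hall x h)
    obtain ⟨j1, hj1⟩ : ∃ j : Fin q, j ≠ i0 := by
      by_cases h : i0 = ⟨0, by omega⟩
      · refine ⟨⟨1, by omega⟩, ?_⟩
        rw [h]
        intro hh
        exact absurd (congrArg Fin.val hh) (by simp)
      · exact ⟨⟨0, by omega⟩, fun hh => h hh.symm⟩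
    obtain ⟨z, hz⟩ := hUne j1
    have hznotin : z ∉ U i0 := by
      intro h
      exact (Set.disjoint_left.mp (hUdisj j1 i0 hj1) hz) h
    obtain ⟨z', hz'z, hz'c⟩ := hdegne z c0
    have hz'notin : z' ∉ U i0 := by
      intro h
      apply hz'c
      rw [hconstU z hznotin z' h, hsymm, hall z hznotin]
    have hvz : v ≠ z := fun h => hznotin (h ▸ hvU)
    have hvz' : v ≠ z' := fun h => hz'notin (h ▸ hvU)
    have hxz : x ≠ z := fun h => hznotin (h ▸ hxU)
    have hxz' : x ≠ z' := fun h => hz'notin (h ▸ hxU)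
    apply hnc4 x z z' (fun h => hxv h.symm) hvz hvz' hxz hxz' (fun h => hz'z h.symm)
    · rw [hsymm x z, hconstU z hznotin x hxU, hsymm z v, hall z hznotin]
      exact hxc
    · rw [hsymm x z, hconstU z hznotin x hxU, hsymm z v, hall z hznotin]
      exact fun h => hz'c h.symm
    · rw [hsymm z' v, hall z' hz'notin]
      exact hz'c
    · rw [hsymm z' v, hall z' hz'notin]
      exact fun h => hxc h.symm
  -- the two crossing classes seen from v
  have hYne : ∃ w, w ∉ U i0 ∧ col v w ≠ apair := by
    by_contra h
    push_neg at h
    exact huniform apair h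
  have hXne : ∃ z, z ∉ U i0 ∧ col v z = apair := by
    by_contra h
    push_neg at h
    apply huniform bpair
    intro u hu
    exact (hcrossv u hu).resolve_left (h u hu)
  obtain ⟨w0, hw0U, hw0a⟩ := hYne
  obtain ⟨x0, hx0U, hx0a⟩ := hXne
  have hw0b : col v w0 = bpair := (hcrossv w0 hw0U).resolve_left hw0a
  have hab : apair ≠ bpair := fun h => hw0a (by rw [hw0b, h])
  -- X and Y as predicates
  have hYb : ∀ u, u ∉ U i0 → col v u ≠ apair → col v u = bpair := by
    intro u h1 h2
    exact (hcrossv u h1).resolve_left h2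
  have hXY' : ∀ z u, z ∉ U i0 → col v z = apair → u ∉ U i0 → col v u ≠ apair →
      col z u = apair ∨ col z u = bpair := by
    intro z u hz hza hu hua
    obtain ⟨jz, hjz, hjzne⟩ := hnotin z hz
    obtain ⟨ju, hju, hjune⟩ := hnotin u hu
    have hne : jz ≠ ju := by
      rintro rfl
      have := hsame i0 jz (fun h => hjzne h.symm) v hvU z hjz u hju
      rw [hza] at this
      exact hua this.symm
    exact hcross jz ju hne z hjz u hju
  -- "poisoned" vertices of X send only bpair to Y
  have hXbrule : ∀ z, z ∉ U i0 → col v z = apair →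
      (∃ u, (u ∉ U i0 ∧ col v u = apair) ∧ u ≠ z ∧ col z u ≠ apair) →
      ∀ w, w ∉ U i0 → col v w ≠ apair → col z w = bpair := by
    intro z hzU hza ⟨u, ⟨huU, hua⟩, huz, hucol⟩ w hwU hwa
    rcases hXY' z w hzU hza hwU hwa with hcol | hcol
    swap
    · exact hcol
    exfalso
    have hwb : col v w = bpair := hYb w hwU hwa
    apply hnc4 w z u (fun h => hwU (h ▸ hvU)) (fun h => hzU (h ▸ hvU)) (fun h => huU (h ▸ hvU))
      (fun h => hwa (h ▸ hza)) (fun h => hwa (h ▸ hua)) (fun h => huz h.symm)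
    · rw [hwb, hsymm w z, hcol]
      exact Ne.symm hab
    · rw [hsymm w z, hcol]
      exact Ne.symm hucol
    · rw [hsymm u v, hua]
      exact hucol
    · rw [hsymm u v, hua, hwb]
      exact hab
  -- "poisoned" vertices of Y send only apair to X
  have hYarule : ∀ w, w ∉ U i0 → col v w ≠ apair →
      (∃ u, (u ∉ U i0 ∧ col v u ≠ apair) ∧ u ≠ w ∧ col w u ≠ bpair) →
      ∀ z, z ∉ U i0 → col v z = apair → col w z = apair := by
    intro w hwU hwa ⟨u, ⟨huU, hua⟩, huw, hucol⟩ z hzU hza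
    rcases hXY' z w hzU hza hwU hwa with hcol | hcol
    · rw [hsymm w z]
      exact hcol
    exfalso
    have hub : col v u = bpair := hYb u huU hua
    apply hnc4 z w u (fun h => hzU (h ▸ hvU)) (fun h => hwU (h ▸ hvU)) (fun h => huU (h ▸ hvU))
      (fun h => hwa (h.symm ▸ hza)) (fun h => hua (h.symm ▸ hza)) (fun h => huw h.symm)
    · rw [hza, hcol]
      exact hab
    · rw [hcol]
      exact Ne.symm hucol
    · rw [hsymm u v, hub]
      exact hucol
    · rw [hsymm u v, hub, hza]
      exact Ne.symm hab
  -- the two sides of the bipartite tournament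
  set A : Set (Fin n) := {z | (z ∉ U i0 ∧ col v z = apair) ∧
    ¬∃ u, (u ∉ U i0 ∧ col v u = apair) ∧ u ≠ z ∧ col z u ≠ apair} with hAdef
  set B : Set (Fin n) := {w | (w ∉ U i0 ∧ col v w ≠ apair) ∧
    ¬∃ u, (u ∉ U i0 ∧ col v u ≠ apair) ∧ u ≠ w ∧ col w u ≠ bpair} with hBdef
  have hABdisj : Disjoint A B := by
    rw [Set.disjoint_left]
    rintro z ⟨⟨_, hza⟩, _⟩ ⟨⟨_, hza'⟩, _⟩
    exact hza' hza
  have harcAB : ∀ z ∈ A, ∀ w ∈ B, col z w = apair ∨ col z w = bpair := by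
    rintro z ⟨⟨hzU, hza⟩, _⟩ w ⟨⟨hwU, hwa⟩, _⟩
    exact hXY' z w hzU hza hwU hwa
  have hAdegB : ∀ z ∈ A, 2 * k ≤ ({w | w ∈ B ∧ col z w = bpair}).ncard + 1 := by
    rintro z ⟨⟨hzU, hza⟩, hznb⟩
    have hsub : {u | u ≠ z ∧ col z u ≠ apair} ⊆ {w | w ∈ B ∧ col z w = bpair} := by
      rintro u ⟨hune, hucol⟩
      by_cases huU : u ∈ U i0
      · exfalso
        apply hucol
        rw [hconstU z hzU u huU, hsymm z v, hza]
      · by_cases hua : col v u = apair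
        · exact absurd ⟨u, ⟨huU, hua⟩, hune, hucol⟩ hznb
        · by_cases huYa : ∃ u', (u' ∉ U i0 ∧ col v u' ≠ apair) ∧ u' ≠ u ∧ col u u' ≠ bpair
          · exfalso
            apply hucol
            rw [hsymm z u]
            exact hYarule u huU hua huYa z hzU hza
          · have hcb : col z u = bpair := (hXY' z u hzU hza huU hua).resolve_left hucol
            exact ⟨⟨⟨huU, hua⟩, huYa⟩, hcb⟩
    have h1 := hdeg z apair
    have h2 := Set.ncard_le_ncard hsub (Set.toFinite _)
    omega
  have hBdegA : ∀ w ∈ B, 2 * k ≤ ({z | z ∈ A ∧ col w z = apair}).ncard + 1 := by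
    rintro w ⟨⟨hwU, hwa⟩, hwnb⟩
    have hwb : col v w = bpair := hYb w hwU hwa
    have hsub : {u | u ≠ w ∧ col w u ≠ bpair} ⊆ {z | z ∈ A ∧ col w z = apair} := by
      rintro u ⟨hune, hucol⟩
      by_cases huU : u ∈ U i0
      · exfalso
        apply hucol
        rw [hconstU w hwU u huU, hsymm w v, hwb]
      · by_cases hua : col v u = apair
        · by_cases huXb : ∃ u', (u' ∉ U i0 ∧ col v u' = apair) ∧ u' ≠ u ∧ col u u' ≠ apair
          · exfalso
            apply hucol
            rw [hsymm w u]
            exact hXbrule u huU hua huXb w hwU hwa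
          · have hca : col w u = apair := by
              rcases hXY' u w huU hua hwU hwa with h | h
              · rw [hsymm w u]
                exact h
              · exfalso
                apply hucol
                rw [hsymm w u]
                exact h
            exact ⟨⟨⟨huU, hua⟩, huXb⟩, hca⟩
        · exact absurd ⟨u, ⟨huU, hua⟩, hune, hucol⟩ hwnb
    have h1 := hdeg w bpair
    have h2 := Set.ncard_le_ncard hsub (Set.toFinite _)
    omega
  have hAne : A.Nonempty := by
    by_contra hAemp
    have hXb : ∀ z, z ∉ U i0 → col v z = apair →
        ∃ u, (u ∉ U i0 ∧ col v u = apair) ∧ u ≠ z ∧ col z u ≠ apair := by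
      intro z hzU hza
      by_contra h
      exact hAemp ⟨z, ⟨hzU, hza⟩, h⟩
    obtain ⟨u, huw0, hucol⟩ := hdegne w0 bpair
    by_cases huU : u ∈ U i0
    · apply hucol
      rw [hconstU w0 hw0U u huU, hsymm w0 v, hw0b]
    · by_cases hua : col v u = apair
      · apply hucol
        rw [hsymm w0 u]
        exact hXbrule u huU hua (hXb u huU hua) w0 hw0U hw0a
      · -- w0 is Y-poisoned
        have hw0Ya : ∃ u', (u' ∉ U i0 ∧ col v u' ≠ apair) ∧ u' ≠ w0 ∧ col w0 u' ≠ bpair :=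
          ⟨u, ⟨huU, hua⟩, huw0, hucol⟩
        have h1 : col w0 x0 = apair := hYarule w0 hw0U hw0a hw0Ya x0 hx0U hx0a
        have h2 : col x0 w0 = bpair := hXbrule x0 hx0U hx0a (hXb x0 hx0U hx0a) w0 hw0U hw0a
        rw [hsymm w0 x0, h2] at h1
        exact hab h1.symm
  have hBne2 : B.Nonempty := by
    by_contra hBemp
    have hYa : ∀ w, w ∉ U i0 → col v w ≠ apair →
        ∃ u, (u ∉ U i0 ∧ col v u ≠ apair) ∧ u ≠ w ∧ col w u ≠ bpair := by
      intro w hwU hwa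
      by_contra h
      exact hBemp ⟨w, ⟨hwU, hwa⟩, h⟩
    obtain ⟨u, hux0, hucol⟩ := hdegne x0 apair
    by_cases huU : u ∈ U i0
    · apply hucol
      rw [hconstU x0 hx0U u huU, hsymm x0 v, hx0a]
    · by_cases hua : col v u = apair
      · -- x0 is X-poisoned
        have hx0Xb : ∃ u', (u' ∉ U i0 ∧ col v u' = apair) ∧ u' ≠ x0 ∧ col x0 u' ≠ apair :=
          ⟨u, ⟨huU, hua⟩, hux0, hucol⟩
        have h1 : col x0 w0 = bpair := hXbrule x0 hx0U hx0a hx0Xb w0 hw0U hw0a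
        have h2 : col w0 x0 = apair := hYarule w0 hw0U hw0a (hYa w0 hw0U hw0a) x0 hx0U hx0a
        rw [hsymm x0 w0, h2] at h1
        exact hab h1
      · apply hucol
        rw [hsymm x0 u]
        exact hYarule u huU hua (hYa u huU hua) x0 hx0U hx0a
  obtain ⟨zf, wf, zf', wf', hallf, hdisjf⟩ :=
    bip_cycles hsymm hab k A B hABdisj harcAB hAdegB hBdegA (fun _ => hAne)
  -- build the k disjoint PC 4-cycles and contradict hL
  apply hL
  have hexist : ∀ j : Fin k, ∃ c : ZMod 4 → Fin n, IsPCCycle col 4 c ∧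
      Set.range c = {zf j, wf j, zf' j, wf' j} := by
    intro j
    obtain ⟨hz, hz', hw, hw', hzz', hww', hc1, hc2, hc3, hc4⟩ := hallf j
    have hZa : col v (zf j) = apair := hz.1.2
    have hZ'a : col v (zf' j) = apair := hz'.1.2
    have hWa : col v (wf j) ≠ apair := hw.1.2
    have hW'a : col v (wf' j) ≠ apair := hw'.1.2
    apply mkC4 col (zf j) (wf j) (zf' j) (wf' j)
      (fun h => hWa (h ▸ hZa)) hzz' (fun h => hW'a (h ▸ hZa))
      (fun h => hWa (h.symm ▸ hZ'a)) hww' (fun h => hW'a (h ▸ hZ'a))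
    · rw [hc1, hc2]
      exact Ne.symm hab
    · rw [hc2, hc3]
      exact hab
    · rw [hc3, hc4]
      exact Ne.symm hab
    · rw [hc4, hc1]
      exact hab
  choose cf hcf1 hcf2 using hexist
  refine ⟨fun _ => 4, cf, fun j => ⟨hcf1 j, by norm_num⟩, ?_⟩
  intro j j' hjj'
  rw [Set.disjoint_left, hcf2 j, hcf2 j']
  intro x hx hx'
  simp only [Set.mem_insert_iff, Set.mem_singleton_iff] at hx hx'
  obtain ⟨hn1, hn2, hn3, hn4⟩ := hdisjf j j' hjj' x hx
  rcases hx' with h | h | h | h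
  · exact hn1 h
  · exact hn2 h
  · exact hn3 h
  · exact hn4 h
end

section
/- Let G be an edge-colored complete graph on n vertices with Δ^mon(G) ≤ n − 2k. Then either G contains k pairwise vertex-disjoint properly edge-colored cycles of length at most 4, or every vertex of G whose color degree is at most 3 is contained in a properly edge-colored cycle of length 3 or 4. -/
/-!
Let `v` have colour degree at most 3 and lie on no PC cycle of length 3 or 4, and sort the other
vertices into classes by the colour of their edge to `v`. As `v` is on no PC triangle, an edge
between two classes carries the colour of one of them; orient it towards the class whose colour
it carries. As `v` is on no PC 4-cycle, a vertex with an edge of a foreign colour inside its own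
class gives each of its edges to another class the colour of that class. So if `u` is pure (all
its edges into its class have the class colour), the edges at `u` of that colour go to `v`, into
its class, to impure vertices or to in-neighbours of `u`, and `u` has at least
`n - Δ^mon - 1 ≥ 2k - 1` out-neighbours among the pure vertices. Consecutive arcs carry the
colours of distinct classes, so every directed cycle is PC.

It remains to find `k` disjoint directed cycles of length at most 4 in an oriented complete
multipartite graph with at most three parts and minimum out-degree at least `2k - 1`. Pass to a
terminal strong component. A directed triangle in it meets all three parts, so deleting it costs
every vertex at most two out-neighbours. Without triangles, the component contains a directed
4-cycle alternating between two parts, a vertex of a third part beats all of it or none of it,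
and propagating `IsAbove` backwards along arcs shows that no vertex of the component beats all
of it. Either way we delete the cycle and recurse.
-/

namespace ShortPCCycles

open Set

section Cycles

variable {V ι : Type*}

def triangle (p q r : V) : ZMod 3 → V := ![p, q, r]

def square (a b c d : V) : ZMod 4 → V := ![a, b, c, d]

theorem range_triangle (p q r : V) : range (triangle p q r) = {p, q, r} := by
  change range ![p, q, r] = _
  ext; simp; tauto

theorem range_square (a b c d : V) : range (square a b c d) = {a, b, c, d} := by
  change range ![a, b, c, d] = _
  ext; simp; tauto

theorem triangle_injective {p q r : V} (hpq : p ≠ q) (hqr : q ≠ r) (hpr : p ≠ r) :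
    Function.Injective (triangle p q r) := by
  intro i j h
  fin_cases i <;> fin_cases j <;> first | rfl | simp_all [triangle, eq_comm]

theorem square_injective {a b c d : V} (hab : a ≠ b) (hac : a ≠ c) (had : a ≠ d) (hbc : b ≠ c)
    (hbd : b ≠ d) (hcd : c ≠ d) : Function.Injective (square a b c d) := by
  intro i j h
  fin_cases i <;> fin_cases j <;> first | rfl | simp_all [square, eq_comm]

theorem IsDicycle.three_le {Arc : V → V → Prop} {m : ℕ} {c : ZMod m → V}
    (hA : ∀ {u w}, Arc u w → ¬Arc w u) (hc : IsDicycle Arc m c) : 3 ≤ m := by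
  obtain ⟨h2, -, harc⟩ := hc
  obtain rfl | h := (show m = 2 ∨ 3 ≤ m by omega)
  · exact absurd (harc 1) (hA (harc 0))
  · exact h

theorem ncard_le_two_of_subset_pair {s : Set V} {a b : V} (h : s ⊆ {a, b}) : s.ncard ≤ 2 :=
  (ncard_le_ncard h).trans <| (ncard_insert_le a {b}).trans (by rw [ncard_singleton])

theorem eq_or_eq_or_eq_of_ncard_le_three {s : Set ι} (hs : s.ncard ≤ 3) (hfin : s.Finite)
    {a b c x : ι} (ha : a ∈ s) (hb : b ∈ s) (hc : c ∈ s) (hx : x ∈ s)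
    (hab : a ≠ b) (hac : a ≠ c) (hbc : b ≠ c) : x = a ∨ x = b ∨ x = c := by
  have : ({a, b, c} : Set ι) = s := eq_of_subset_of_ncard_le
    (by rintro _ (rfl | rfl | rfl) <;> assumption)
    (by rw [ncard_eq_three.2 ⟨a, b, c, hab, hac, hbc, rfl⟩]; exact hs) hfin
  rwa [← this] at hx

end Cycles

section OrientedMultipartite

variable {V ι : Type*} {Arc : V → V → Prop} {cl : V → ι} {W R C : Set V}

structure IsOrientedMultipartite (Arc : V → V → Prop) (cl : V → ι) (W : Set V) : Prop where
  cl_ne : ∀ {u w}, Arc u w → cl u ≠ cl w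
  asymm : ∀ {u w}, Arc u w → ¬Arc w u
  total : ∀ {u w}, u ∈ W → w ∈ W → cl u ≠ cl w → Arc u w ∨ Arc w u

def IsTriangleFreeOn (Arc : V → V → Prop) (R : Set V) : Prop :=
  ∀ p ∈ R, ∀ q ∈ R, ∀ r ∈ R, Arc p q → Arc q r → ¬Arc r p

namespace IsOrientedMultipartite

theorem mono (hG : IsOrientedMultipartite Arc cl W) (h : R ⊆ W) :
    IsOrientedMultipartite Arc cl R :=
  ⟨hG.cl_ne, hG.asymm, fun hu hw => hG.total (h hu) (h hw)⟩

theorem ne (hG : IsOrientedMultipartite Arc cl W) {u w : V} (h : Arc u w) : u ≠ w :=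
  fun e => hG.cl_ne h (congrArg cl e)

theorem arc_trans (hG : IsOrientedMultipartite Arc cl R) (htf : IsTriangleFreeOn Arc R)
    {u w x : V} (hu : u ∈ R) (hw : w ∈ R) (hx : x ∈ R) (huw : Arc u w) (hwx : Arc w x)
    (hne : cl u ≠ cl x) : Arc u x :=
  (hG.total hu hx hne).resolve_right (htf u hu w hw x hx huw hwx)

theorem isDicycle_triangle (hG : IsOrientedMultipartite Arc cl W) {p q r : V}
    (hpq : Arc p q) (hqr : Arc q r) (hrp : Arc r p) : IsDicycle Arc 3 (triangle p q r) :=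
  ⟨by norm_num, triangle_injective (hG.ne hpq) (hG.ne hqr) (hG.ne hrp).symm,
    fun i => by fin_cases i <;> assumption⟩

theorem isDicycle_square (hG : IsOrientedMultipartite Arc cl W) {a b c d : V}
    (hab : Arc a b) (hbc : Arc b c) (hcd : Arc c d) (hda : Arc d a) :
    IsDicycle Arc 4 (square a b c d) := by
  have hac : a ≠ c := by rintro rfl; exact hG.asymm hab hbc
  have hbd : b ≠ d := by rintro rfl; exact hG.asymm hbc hcd
  exact ⟨by norm_num, square_injective (hG.ne hab) hac (hG.ne hda).symm (hG.ne hbc) hbd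
    (hG.ne hcd), fun i => by fin_cases i <;> assumption⟩

theorem ncard_arc_triangle_le [Finite V] (hG : IsOrientedMultipartite Arc cl W)
    (hcl : (cl '' W).ncard ≤ 3) {p q r u : V} (hp : p ∈ W) (hq : q ∈ W) (hr : r ∈ W)
    (hu : u ∈ W) (hpq : Arc p q) (hqr : Arc q r) (hrp : Arc r p) :
    {w ∈ ({p, q, r} : Set V) | Arc u w}.ncard ≤ 2 := by
  -- the triangle meets every part
  obtain hup | huq | hur := eq_or_eq_or_eq_of_ncard_le_three hcl (toFinite _)
    (mem_image_of_mem cl hp) (mem_image_of_mem cl hq) (mem_image_of_mem cl hr)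
    (mem_image_of_mem cl hu) (hG.cl_ne hpq) (Ne.symm (hG.cl_ne hrp)) (hG.cl_ne hqr)
  · refine ncard_le_two_of_subset_pair (a := q) (b := r) ?_
    rintro w ⟨rfl | rfl | rfl, huw⟩
    exacts [(hG.cl_ne huw hup).elim, .inl rfl, .inr rfl]
  · refine ncard_le_two_of_subset_pair (a := p) (b := r) ?_
    rintro w ⟨rfl | rfl | rfl, huw⟩
    exacts [.inl rfl, (hG.cl_ne huw huq).elim, .inr rfl]
  · refine ncard_le_two_of_subset_pair (a := p) (b := q) ?_
    rintro w ⟨rfl | rfl | rfl, huw⟩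
    exacts [.inl rfl, .inr rfl, (hG.cl_ne huw hur).elim]

end IsOrientedMultipartite

def IsOutClosed (Arc : V → V → Prop) (W S : Set V) : Prop :=
  S ⊆ W ∧ ∀ u ∈ S, ∀ w ∈ W, Arc u w → w ∈ S

/-- A terminal strong component of the digraph that `Arc` induces on `W`. -/
def IsTerminal (Arc : V → V → Prop) (W R : Set V) : Prop :=
  Minimal (fun S => S.Nonempty ∧ IsOutClosed Arc W S) R

theorem exists_isTerminal [Finite V] (hW : W.Nonempty) : ∃ R, IsTerminal Arc W R :=
  exists_minimal_of_wellFoundedLT _ ⟨W, hW, subset_rfl, fun _ _ _ hw _ => hw⟩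

namespace IsTerminal

theorem nonempty (hR : IsTerminal Arc W R) : R.Nonempty := hR.1.1

theorem subset (hR : IsTerminal Arc W R) : R ⊆ W := hR.1.2.1

theorem mem_of_arc (hR : IsTerminal Arc W R) {u w : V} (hu : u ∈ R) (hw : w ∈ W)
    (h : Arc u w) : w ∈ R :=
  hR.1.2.2 u hu w hw h

/-- Every vertex of `R` reaches `z`, in the form of an induction principle. -/
theorem induction (hR : IsTerminal Arc W R) {P : V → Prop}
    (hP : ∀ x ∈ R, ∀ w ∈ R, Arc x w → P w → P x) {z : V} (hz : z ∈ R) (hPz : P z) :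
    ∀ x ∈ R, P x := by
  by_contra! h
  obtain ⟨x, hx, hPx⟩ := h
  have hS : IsOutClosed Arc W {x ∈ R | ¬P x} := by
    refine ⟨fun y hy => hR.subset hy.1, fun y hy w hw hyw => ?_⟩
    have hwR := hR.mem_of_arc hy.1 hw hyw
    exact ⟨hwR, fun hPw => hy.2 (hP y hy.1 w hwR hyw hPw)⟩
  exact (hR.2 (y := {x ∈ R | ¬P x}) ⟨⟨x, hx, hPx⟩, hS⟩ (sep_subset _ _) hz).2 hPz

end IsTerminal

def IsAbove (Arc : V → V → Prop) (cl : V → ι) (R C : Set V) (w : V) : Prop :=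
  (∀ c ∈ C, cl c ≠ cl w → Arc w c) ∧ (cl w ∈ cl '' C → ∃ ζ ∈ R, (∀ c ∈ C, Arc ζ c) ∧ Arc w ζ)

theorem IsAbove.of_arc (hG : IsOrientedMultipartite Arc cl R) (htf : IsTriangleFreeOn Arc R)
    (hC : C ⊆ R) (hCin : ∀ c ∈ C, ∃ c' ∈ C, Arc c' c) {x w : V} (hx : x ∈ R) (hw : w ∈ R)
    (hxw : Arc x w) (h : IsAbove Arc cl R C w) : IsAbove Arc cl R C x := by
  obtain ⟨hbeat, hwit⟩ := h
  have hζcl : ∀ ζ, (∀ c ∈ C, Arc ζ c) → cl ζ ∉ cl '' C := by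
    rintro ζ hζ ⟨c, hc, hcζ⟩
    exact hG.cl_ne (hζ c hc) hcζ.symm
  refine ⟨fun c hc hcx => ?_, fun hxC => ?_⟩
  · by_cases hcw : cl c = cl w
    · obtain ⟨ζ, hζR, hζC, hwζ⟩ := hwit ⟨c, hc, hcw⟩
      by_cases hxC : cl x ∈ cl '' C
      · have hxζ : Arc x ζ := hG.arc_trans htf hx hw hζR hxw hwζ fun h => hζcl ζ hζC (h ▸ hxC)
        exact hG.arc_trans htf hx hζR (hC hc) hxζ (hζC c hc) (Ne.symm hcx)
      · obtain ⟨c', hc', hc'c⟩ := hCin c hc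
        have hwc' : Arc w c' := hbeat c' hc' (hcw ▸ hG.cl_ne hc'c)
        have hxc' : Arc x c' :=
          hG.arc_trans htf hx hw (hC hc') hxw hwc' fun h => hxC ⟨c', hc', h.symm⟩
        exact hG.arc_trans htf hx (hC hc') (hC hc) hxc' hc'c (Ne.symm hcx)
    · exact hG.arc_trans htf hx hw (hC hc) hxw (hbeat c hc hcw) (Ne.symm hcx)
  · by_cases hwC : cl w ∈ cl '' C
    · obtain ⟨ζ, hζR, hζC, hwζ⟩ := hwit hwC
      exact ⟨ζ, hζR, hζC, hG.arc_trans htf hx hw hζR hxw hwζ fun h => hζcl ζ hζC (h ▸ hxC)⟩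
    · exact ⟨w, hw, fun c hc => hbeat c hc fun h => hwC ⟨c, hc, h⟩, hxw⟩

namespace IsTerminal

theorem not_forall_arc (hR : IsTerminal Arc W R) (hG : IsOrientedMultipartite Arc cl W)
    (htf : IsTriangleFreeOn Arc R) (hC : C ⊆ R) (hCin : ∀ c ∈ C, ∃ c' ∈ C, Arc c' c)
    (hCne : C.Nonempty) {u : V} (hu : u ∈ R) : ¬∀ c ∈ C, Arc u c := by
  intro huC
  have hu_above : IsAbove Arc cl R C u :=
    ⟨fun c hc _ => huC c hc, fun ⟨c, hc, hcu⟩ => (hG.cl_ne (huC c hc) hcu.symm).elim⟩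
  have h_above := hR.induction
    (fun x hx w hw => IsAbove.of_arc (hG.mono hR.subset) htf hC hCin hx hw) hu hu_above
  obtain ⟨c, hc⟩ := hCne
  obtain ⟨c', hc', hc'c⟩ := hCin c hc
  exact hG.asymm hc'c ((h_above c (hC hc)).1 c' hc' (hG.cl_ne hc'c))

theorem exists_square (hR : IsTerminal Arc W R) (hG : IsOrientedMultipartite Arc cl W)
    (htf : IsTriangleFreeOn Arc R) (hout : ∀ u ∈ R, ∃ w ∈ W, Arc u w) :
    ∃ a ∈ R, ∃ b ∈ R, ∃ c ∈ R, ∃ d ∈ R,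
      Arc a b ∧ Arc b c ∧ Arc c d ∧ Arc d a ∧ cl a = cl c ∧ cl b = cl d := by
  by_contra! hno
  have hG' := hG.mono hR.subset
  obtain ⟨a, ha⟩ := hR.nonempty
  obtain ⟨b, hbW, hab⟩ := hout a ha
  -- `H` survives every step of a walk from `b` back to `a`, unless a square closes up
  let H : V → Prop := fun x => Arc a x ∨ (cl x = cl a ∧ ∃ y ∈ R, Arc a y ∧ Arc y x)
  have step : ∀ x ∈ R, ∀ x' ∈ R, Arc x x' → H x → H x' := by
    rintro x hx x' hx' hxx' (hax | ⟨hxa, y, hy, hay, hyx⟩)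
    · by_cases hx'a : cl x' = cl a
      · exact Or.inr ⟨hx'a, x, hx, hax, hxx'⟩
      · exact Or.inl (hG'.arc_trans htf ha hx hx' hax hxx' (Ne.symm hx'a))
    · refine Or.inl ((hG'.total ha hx' ?_).resolve_right fun hx'a => ?_)
      · exact hxa ▸ hG.cl_ne hxx'
      · have hyx' : Arc y x' := hG'.arc_trans htf hy hx hx' hyx hxx'
          (hno a ha y hy x hx x' hx' hay hyx hxx' hx'a hxa.symm)
        exact htf a ha y hy x' hx' hay hyx' hx'a
  have hHa : ¬H a := by
    rintro (haa | ⟨-, y, -, hay, hya⟩)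
    exacts [hG.ne haa rfl, hG.asymm hay hya]
  exact hR.induction (P := fun x => ¬H x)
    (fun x hx x' hx' hxx' hnH hHx => hnH (step x hx x' hx' hxx' hHx))
    ha hHa b (hR.mem_of_arc ha hbW hab) (Or.inl hab)

theorem ncard_arc_square_le (hR : IsTerminal Arc W R) (hG : IsOrientedMultipartite Arc cl W)
    (htf : IsTriangleFreeOn Arc R) {a b c d u : V} (ha : a ∈ R) (hb : b ∈ R) (hc : c ∈ R)
    (hd : d ∈ R) (hab : Arc a b) (hbc : Arc b c) (hcd : Arc c d) (hda : Arc d a)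
    (hac : cl a = cl c) (hbd : cl b = cl d) (hu : u ∈ R) :
    {w ∈ ({a, b, c, d} : Set V) | Arc u w}.ncard ≤ 2 := by
  by_cases hua : cl u = cl a
  · refine ncard_le_two_of_subset_pair (a := b) (b := d) ?_
    rintro w ⟨rfl | rfl | rfl | rfl, huw⟩
    exacts [(hG.cl_ne huw hua).elim, .inl rfl, (hG.cl_ne huw (hua.trans hac)).elim, .inr rfl]
  by_cases hub : cl u = cl b
  · refine ncard_le_two_of_subset_pair (a := a) (b := c) ?_
    rintro w ⟨rfl | rfl | rfl | rfl, huw⟩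
    exacts [.inl rfl, (hG.cl_ne huw hub).elim, .inr rfl, (hG.cl_ne huw (hub.trans hbd)).elim]
  -- beating one vertex of the square, `u` would beat all four
  have next : ∀ {x y}, x ∈ R → y ∈ R → Arc x y → cl y ≠ cl u → Arc u x → Arc u y :=
    fun hx hy hxy hyu hux => (hG.mono hR.subset).arc_trans htf hu hx hy hux hxy (Ne.symm hyu)
  have hab' := next ha hb hab (Ne.symm hub)
  have hbc' := next hb hc hbc (hac ▸ Ne.symm hua)
  have hcd' := next hc hd hcd (hbd ▸ Ne.symm hub)
  have hda' := next hd ha hda (Ne.symm hua)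
  have hnot := hR.not_forall_arc hG htf (C := {a, b, c, d})
    (by rintro _ (rfl | rfl | rfl | rfl) <;> assumption)
    (by rintro _ (rfl | rfl | rfl | rfl); exacts [⟨d, by simp, hda⟩, ⟨a, by simp, hab⟩,
      ⟨b, by simp, hbc⟩, ⟨c, by simp, hcd⟩])
    (insert_nonempty _ _) hu
  suffices {w ∈ ({a, b, c, d} : Set V) | Arc u w} = ∅ by rw [this, ncard_empty]; omega
  refine eq_empty_of_forall_notMem fun w ⟨hw, huw⟩ => hnot ?_
  have hua' : Arc u a := by
    rcases hw with rfl | rfl | rfl | rfl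
    exacts [huw, hda' (hcd' (hbc' huw)), hda' (hcd' huw), hda' huw]
  rintro _ (rfl | rfl | rfl | rfl)
  exacts [hua', hab' hua', hbc' (hab' hua'), hcd' (hbc' (hab' hua'))]

theorem exists_short_dicycle [Finite V] (hR : IsTerminal Arc W R)
    (hG : IsOrientedMultipartite Arc cl W) (hcl : (cl '' W).ncard ≤ 3)
    (hout : ∀ u ∈ R, ∃ w ∈ W, Arc u w) :
    ∃ m, ∃ c : ZMod m → V, IsDicycle Arc m c ∧ m ≤ 4 ∧ range c ⊆ R ∧
      ∀ u ∈ R, {w ∈ range c | Arc u w}.ncard ≤ 2 := by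
  by_cases htf : IsTriangleFreeOn Arc R
  · obtain ⟨a, ha, b, hb, c, hc, d, hd, hab, hbc, hcd, hda, hac, hbd⟩ :=
      hR.exists_square hG htf hout
    refine ⟨4, square a b c d, hG.isDicycle_square hab hbc hcd hda, le_rfl, ?_, fun u hu => ?_⟩
    · rw [range_square]
      rintro _ (rfl | rfl | rfl | rfl) <;> assumption
    · rw [range_square]
      exact hR.ncard_arc_square_le hG htf ha hb hc hd hab hbc hcd hda hac hbd hu
  · simp only [IsTriangleFreeOn, not_forall, not_not] at htf
    obtain ⟨p, hp, q, hq, r, hr, hpq, hqr, hrp⟩ := htf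
    refine ⟨3, triangle p q r, hG.isDicycle_triangle hpq hqr hrp, by norm_num, ?_, fun u hu => ?_⟩
    · rw [range_triangle]
      rintro _ (rfl | rfl | rfl) <;> assumption
    · rw [range_triangle]
      have hW := hR.subset
      exact hG.ncard_arc_triangle_le hcl (hW hp) (hW hq) (hW hr) (hW hu) hpq hqr hrp

end IsTerminal

def HasKDisjointShortDicyclesIn (Arc : V → V → Prop) (W : Set V) (k : ℕ) : Prop :=
  ∃ F : Fin k → Σ m, ZMod m → V,
    (∀ j, IsDicycle Arc (F j).1 (F j).2 ∧ (F j).1 ≤ 4 ∧ range (F j).2 ⊆ W) ∧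
    Pairwise fun j j' => Disjoint (range (F j).2) (range (F j').2)

namespace HasKDisjointShortDicyclesIn

theorem mono {k : ℕ} (h : HasKDisjointShortDicyclesIn Arc R k) (hRW : R ⊆ W) :
    HasKDisjointShortDicyclesIn Arc W k :=
  let ⟨F, hF, hdisj⟩ := h
  ⟨F, fun j => ⟨(hF j).1, (hF j).2.1, (hF j).2.2.trans hRW⟩, hdisj⟩

theorem cons {k m : ℕ} {c : ZMod m → V} (hc : IsDicycle Arc m c) (hm : m ≤ 4)
    (hcW : range c ⊆ W) (h : HasKDisjointShortDicyclesIn Arc (W \ range c) k) :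
    HasKDisjointShortDicyclesIn Arc W (k + 1) := by
  obtain ⟨F, hF, hdisj⟩ := h
  have hcF : ∀ j, Disjoint (range c) (range (F j).2) :=
    fun j => disjoint_sdiff_right.mono_right (hF j).2.2
  refine ⟨Fin.cons ⟨m, c⟩ F, fun j => ?_, fun j j' hjj' => ?_⟩
  · cases j using Fin.cases with
    | zero => exact ⟨hc, hm, hcW⟩
    | succ j => exact ⟨(hF j).1, (hF j).2.1, (hF j).2.2.trans sdiff_subset⟩
  · cases j using Fin.cases <;> cases j' using Fin.cases
    · exact absurd rfl hjj'
    · exact hcF _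
    · exact (hcF _).symm
    · exact hdisj fun h => hjj' (congrArg Fin.succ h)

end HasKDisjointShortDicyclesIn

theorem hasKDisjointShortDicyclesIn [Finite V] {k : ℕ} (hG : IsOrientedMultipartite Arc cl W)
    (hcl : (cl '' W).ncard ≤ 3) (hdeg : ∀ u ∈ W, 2 * k ≤ {w ∈ W | Arc u w}.ncard + 1)
    (hne : k ≠ 0 → W.Nonempty) : HasKDisjointShortDicyclesIn Arc W k := by
  induction k generalizing W with
  | zero => exact ⟨Fin.elim0, fun j => j.elim0, fun j => j.elim0⟩
  | succ k ih =>
    obtain ⟨R, hR⟩ := exists_isTerminal (Arc := Arc) (hne k.succ_ne_zero)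
    have hout : ∀ u ∈ R, ∃ w ∈ W, Arc u w := fun u hu =>
      nonempty_of_ncard_ne_zero (s := {w ∈ W | Arc u w}) (by have := hdeg u (hR.subset hu); omega)
    obtain ⟨m, c, hc, hm, hcR, hcdeg⟩ := hR.exists_short_dicycle hG hcl hout
    -- out-neighbours of vertices of `R` stay in `R`, and at most two of them are on the cycle
    have hdeg' : ∀ u ∈ R,
        {w ∈ W | Arc u w}.ncard ≤ {w ∈ R \ range c | Arc u w}.ncard + 2 := by
      intro u hu
      refine (ncard_le_ncard (t := {w ∈ R \ range c | Arc u w} ∪ {w ∈ range c | Arc u w})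
        ?_).trans ((ncard_union_le _ _).trans (Nat.add_le_add_left (hcdeg u hu) _))
      rintro w ⟨hw, huw⟩
      by_cases hwc : w ∈ range c
      exacts [.inr ⟨hwc, huw⟩, .inl ⟨⟨hR.mem_of_arc hu hw huw, hwc⟩, huw⟩]
    refine (HasKDisjointShortDicyclesIn.cons hc hm hcR (ih (hG.mono ?_) ?_ ?_ ?_)).mono hR.subset
    · exact sdiff_subset.trans hR.subset
    · exact (ncard_le_ncard (image_mono (sdiff_subset.trans hR.subset))).trans hcl
    · intro u hu
      have := hdeg u (hR.subset hu.1)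
      have := hdeg' u hu.1
      omega
    · intro hk
      have hc0 := hcR ⟨0, rfl⟩
      have := hdeg (c 0) (hR.subset hc0)
      have := hdeg' (c 0) hc0
      obtain ⟨w, hw, -⟩ := nonempty_of_ncard_ne_zero (s := {w ∈ R \ range c | Arc (c 0) w})
        (by omega)
      exact ⟨w, hw⟩

end OrientedMultipartite

section EdgeColoring

variable {V : Type*} {col : V → V → ℕ} {v : V}

theorem isPCCycle_triangle {p q r : V} (hpq : p ≠ q) (hqr : q ≠ r) (hpr : p ≠ r)
    (h₁ : col p q ≠ col q r) (h₂ : col q r ≠ col r p) (h₃ : col r p ≠ col p q) :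
    IsPCCycle col 3 (triangle p q r) :=
  ⟨le_rfl, triangle_injective hpq hqr hpr, fun i => by fin_cases i <;> assumption⟩

theorem isPCCycle_square {a b c d : V} (hab : a ≠ b) (hac : a ≠ c) (had : a ≠ d) (hbc : b ≠ c)
    (hbd : b ≠ d) (hcd : c ≠ d) (h₁ : col a b ≠ col b c) (h₂ : col b c ≠ col c d)
    (h₃ : col c d ≠ col d a) (h₄ : col d a ≠ col a b) : IsPCCycle col 4 (square a b c d) :=
  ⟨by norm_num, square_injective hab hac had hbc hbd hcd, fun i => by fin_cases i <;> assumption⟩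

theorem monDeg_add_ncard [Finite V] (col : V → V → ℕ) (u : V) (a : ℕ) :
    monDeg col u a + {w | w = u ∨ col u w ≠ a}.ncard = Nat.card V := by
  rw [monDeg, ← ncard_add_ncard_compl {w | w ≠ u ∧ col u w = a}]
  congr 2
  ext w
  simp [or_iff_not_imp_left]

theorem exists_col_ne [Finite V] {a : ℕ} (hmon : monDeg col v a + 2 ≤ Nat.card V) :
    ∃ w ≠ v, col v w ≠ a := by
  by_contra! h
  have hsub : {w | w = v ∨ col v w ≠ a} ⊆ {v} :=
    fun w hw => hw.elim id fun hne => by_contra fun hwv => hne (h w hwv)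
  have := ncard_le_ncard hsub
  have := monDeg_add_ncard col v a
  rw [ncard_singleton] at *
  omega

def NoShortPCCycleThrough (col : V → V → ℕ) (v : V) : Prop :=
  ∀ m (c : ZMod m → V), IsPCCycle col m c → m ≤ 4 → v ∉ range c

def IsPure (col : V → V → ℕ) (v u : V) : Prop :=
  ∀ w, w ≠ u → w ≠ v → col v w = col v u → col u w = col v u

def pureVertices (col : V → V → ℕ) (v : V) : Set V := {u | u ≠ v ∧ IsPure col v u}

def classArc (col : V → V → ℕ) (v u w : V) : Prop := col v u ≠ col v w ∧ col u w = col v w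

theorem classArc_asymm (hsymm : ∀ u w, col u w = col w u) {u w : V}
    (h : classArc col v u w) : ¬classArc col v w u :=
  fun h' => h.1 (h'.2.symm.trans ((hsymm w u).trans h.2))

theorem isPCCycle_of_isDicycle (hsymm : ∀ u w, col u w = col w u) {m : ℕ} {c : ZMod m → V}
    (hc : IsDicycle (classArc col v) m c) : IsPCCycle col m c := by
  refine ⟨IsDicycle.three_le (classArc_asymm hsymm) hc, hc.2.1, fun i => ?_⟩
  have h₁ := hc.2.2 i
  have h₂ := hc.2.2 (i + 1)
  rw [add_assoc, one_add_one_eq_two] at h₂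
  rw [h₁.2, h₂.2]
  exact h₂.1

namespace NoShortPCCycleThrough

theorem col_eq_or_col_eq (hv : NoShortPCCycleThrough col v) (hsymm : ∀ u w, col u w = col w u)
    {p q : V} (hp : p ≠ v) (hq : q ≠ v) (hpq : col v p ≠ col v q) :
    col p q = col v p ∨ col p q = col v q := by
  by_contra! h
  refine hv 3 (triangle v p q) (isPCCycle_triangle hp.symm (fun e => hpq (congrArg _ e)) hq.symm
    (Ne.symm h.1) ?_ ?_) (by norm_num) ⟨0, rfl⟩
  · rw [hsymm q v]; exact h.2
  · rw [hsymm q v]; exact Ne.symm hpq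

theorem col_eq_of_not_isPure (hv : NoShortPCCycleThrough col v)
    (hsymm : ∀ u w, col u w = col w u) {u w : V} (hu : ¬IsPure col v u) (huv : u ≠ v)
    (hwv : w ≠ v) (huw : col v u ≠ col v w) : col u w = col v w := by
  simp only [IsPure, not_forall] at hu
  obtain ⟨u', hu'u, hu'v, hu'cl, hu'col⟩ := hu
  refine (hv.col_eq_or_col_eq hsymm huv hwv huw).resolve_left fun h => ?_
  refine hv 4 (square v u' u w) (isPCCycle_square hu'v.symm huv.symm hwv.symm hu'u
    (fun e => huw (hu'cl ▸ e ▸ rfl)) (fun e => huw (congrArg _ e)) ?_ ?_ ?_ ?_) le_rfl ⟨0, rfl⟩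
  · rw [hu'cl, hsymm u' u]; exact Ne.symm hu'col
  · rw [h, hsymm u' u]; exact hu'col
  · rw [h, hsymm w v]; exact huw
  · rw [hsymm w v, hu'cl]; exact Ne.symm huw

theorem isOrientedMultipartite (hv : NoShortPCCycleThrough col v)
    (hsymm : ∀ u w, col u w = col w u) :
    IsOrientedMultipartite (classArc col v) (col v) (pureVertices col v) where
  cl_ne h := h.1
  asymm := classArc_asymm hsymm
  total hu hw hne := (hv.col_eq_or_col_eq hsymm hu.1 hw.1 hne).symm.imp (fun h => ⟨hne, h⟩)
    fun h => ⟨Ne.symm hne, (hsymm _ _).trans h⟩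

/-- Every `w ≠ u` whose edge to `u` misses the class colour of `u` is a pure out-neighbour of
`u`. -/
theorem card_le_monDeg_add [Finite V] (hv : NoShortPCCycleThrough col v)
    (hsymm : ∀ u w, col u w = col w u) {u : V} (hu : u ∈ pureVertices col v) :
    Nat.card V ≤
      monDeg col u (col v u) + ({w ∈ pureVertices col v | classArc col v u w}.ncard + 1) := by
  rw [← monDeg_add_ncard col u (col v u)]
  refine Nat.add_le_add_left ((ncard_le_ncard fun w hw => ?_).trans (ncard_insert_le u _)) _
  by_cases hwu : w = u
  · exact hwu ▸ mem_insert _ _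
  have hw : col u w ≠ col v u := hw.resolve_left hwu
  have hwv : w ≠ v := fun e => hw (e ▸ hsymm u v)
  have hcl : col v u ≠ col v w := fun h => hw (hu.2 w hwu hwv h.symm)
  have hcol : col u w = col v w := (hv.col_eq_or_col_eq hsymm hu.1 hwv hcl).resolve_left hw
  have hpure : IsPure col v w := by
    by_contra hnp
    exact hw ((hsymm u w).trans (hv.col_eq_of_not_isPure hsymm hnp hwv hu.1 (Ne.symm hcl)))
  exact mem_insert_of_mem _ ⟨⟨hwv, hpure⟩, hcl, hcol⟩

theorem pureVertices_nonempty [Finite V] (hv : NoShortPCCycleThrough col v)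
    (hsymm : ∀ u w, col u w = col w u) (hmon : ∀ a, monDeg col v a + 2 ≤ Nat.card V) :
    (pureVertices col v).Nonempty := by
  obtain ⟨u, huv, -⟩ := exists_col_ne (hmon 0)
  obtain ⟨w, hwv, hwu⟩ := exists_col_ne (hmon (col v u))
  by_cases hu : IsPure col v u
  · exact ⟨u, huv, hu⟩
  by_cases hw : IsPure col v w
  · exact ⟨w, hwv, hw⟩
  -- two impure vertices of different classes would each force the colour of the other
  have h₁ := hv.col_eq_of_not_isPure hsymm hu huv hwv (Ne.symm hwu)
  have h₂ := hv.col_eq_of_not_isPure hsymm hw hwv huv hwu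
  exact absurd (h₁.symm.trans ((hsymm u w).trans h₂)) hwu

theorem hasKDisjointShortPCCycles [Finite V] {k : ℕ} (hv : NoShortPCCycleThrough col v)
    (hsymm : ∀ u w, col u w = col w u) (hmon : ∀ u a, monDeg col u a + 2 * k ≤ Nat.card V)
    (hv3 : colorDeg col v ≤ 3) : HasKDisjointShortPCCycles col k := by
  obtain ⟨F, hF, hdisj⟩ := hasKDisjointShortDicyclesIn (hv.isOrientedMultipartite hsymm) (k := k)
    ((ncard_le_ncard (image_mono fun u hu => hu.1)).trans hv3)
    (fun u hu => by have := hv.card_le_monDeg_add hsymm hu; have := hmon u (col v u); omega)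
    (fun hk => hv.pureVertices_nonempty hsymm fun a => by have := hmon v a; omega)
  exact ⟨fun j => (F j).1, fun j => (F j).2,
    fun j => ⟨isPCCycle_of_isDicycle hsymm (hF j).1, (hF j).2.1⟩, fun j j' h => hdisj h⟩

end NoShortPCCycleThrough

end EdgeColoring

end ShortPCCycles

/-- If Δ^mon(G) ≤ n − 2k, then either G has k disjoint short PC cycles, or
every vertex of color degree at most 3 lies on a PC cycle of length 3 or 4. -/
theorem stmt9 (n k : ℕ) (col : Fin n → Fin n → ℕ)
    (hsymm : ∀ u v, col u v = col v u)
    (hmon : ∀ v a, monDeg col v a + 2 * k ≤ n) :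
    HasKDisjointShortPCCycles col k ∨
      ∀ v : Fin n, colorDeg col v ≤ 3 →
        ∃ (m : ℕ) (c : ZMod m → Fin n),
          IsPCCycle col m c ∧ m ≤ 4 ∧ v ∈ Set.range c := by
  refine or_iff_not_imp_right.2 fun h => ?_
  push Not at h
  obtain ⟨v, hv3, hv⟩ := h
  exact ShortPCCycles.NoShortPCCycleThrough.hasKDisjointShortPCCycles hv hsymm
    (by simpa using hmon) hv3
end

section
/- Every edge-colored complete graph on n ≥ 2 vertices containing no rainbow triangle admits a Gallai partition: a partition U1, …, Uq of the vertex set with q ≥ 2 such that at most two colors appear on edges between distinct parts and exactly one color appears between each pair of parts. -/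
/-!
A module is a set `M` of at least two vertices that every vertex outside `M` sees in a single
color. Contracting a proper module to one of its vertices gives a smaller graph, whose Gallai
partition blows up to one of the whole graph. Otherwise, since there are no rainbow
triangles, the vertices reachable from `x` along edges of color `c` form a module, so every
color class is connected and meets every vertex. Remove a vertex `v` and take a Gallai
partition of the rest, with colors `a`, `b` between the parts. A color `c ∉ {a, b}` can leave
a part only through `v`, so `v` sends `c` into every part; the triangles through `v` then
force all other colors at `v` to coincide. As `v` sees every color, at most two colors occur,
and the singletons form a Gallai partition.
-/

namespace Gallai

open Set

variable {V : Type*} {col : V → V → ℕ} {S : Set V}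

def HasGallaiPartitionOn (col : V → V → ℕ) (S : Set V) : Prop :=
  ∃ (q : ℕ) (U : Fin q → Set V), 2 ≤ q ∧ (∀ i, (U i).Nonempty) ∧
    (∀ i j, i ≠ j → Disjoint (U i) (U j)) ∧ (⋃ i, U i) = S ∧
    (∀ i j, i ≠ j → ∃ a, ∀ x ∈ U i, ∀ y ∈ U j, col x y = a) ∧
    ∃ a b, ∀ i j, i ≠ j → ∀ x ∈ U i, ∀ y ∈ U j, col x y = a ∨ col x y = b

def UsesAtMostTwoColors (col : V → V → ℕ) (S : Set V) : Prop :=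
  ∃ a b, ∀ x ∈ S, ∀ y ∈ S, x ≠ y → col x y = a ∨ col x y = b

def IsProperModule (col : V → V → ℕ) (S M : Set V) : Prop :=
  M ⊂ S ∧ M.Nontrivial ∧ ∀ z ∈ S \ M, ∃ c, ∀ x ∈ M, col x z = c

def IsPrimeOn (col : V → V → ℕ) (S : Set V) : Prop :=
  ∀ M, ¬ IsProperModule col S M

def colorComponent (col : V → V → ℕ) (S : Set V) (c : ℕ) (x : V) : Set V :=
  {u | Relation.ReflTransGen (fun p q => q ∈ S ∧ p ≠ q ∧ col p q = c) x u}

lemma triangle_of_not_hasRainbowTriangle (hrb : ¬ HasRainbowTriangle col) {x y z : V}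
    (hxy : x ≠ y) (hyz : y ≠ z) (hxz : x ≠ z) :
    col x y = col y z ∨ col y z = col x z ∨ col x y = col x z := by
  by_contra! h
  exact hrb ⟨x, y, z, hxy, hyz, hxz, h⟩

lemma hasGallaiPartitionOn_of_usesAtMostTwoColors (hS : S.Finite) (hnt : S.Nontrivial)
    (h : UsesAtMostTwoColors col S) : HasGallaiPartitionOn col S := by
  have := hS.to_subtype
  have := hnt.coe_sort
  obtain ⟨a, b, hab⟩ := h
  set e := Finite.equivFin S
  have hne : ∀ i j, i ≠ j → (e.symm i : V) ≠ e.symm j :=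
    fun i j hij => Subtype.val_injective.ne (e.symm.injective.ne hij)
  refine ⟨Nat.card S, fun i => {(e.symm i : V)}, Finite.one_lt_card_iff_nontrivial.2 ‹_›,
    fun i => singleton_nonempty _, fun i j hij => disjoint_singleton.2 (hne i j hij), ?_,
    fun i j _ => ⟨col (e.symm i) (e.symm j), ?_⟩, a, b, ?_⟩
  · rw [iUnion_singleton_eq_range]
    exact (e.symm.surjective.range_comp Subtype.val).trans Subtype.range_coe
  · rintro x rfl y rfl
    rfl
  · rintro i j hij x rfl y rfl
    exact hab _ (e.symm i).2 _ (e.symm j).2 (hne i j hij)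

lemma usesAtMostTwoColors_of_subsingleton_diff (hsymm : ∀ u v, col u v = col v u) {v : V}
    (h : (S \ {v}).Subsingleton) : UsesAtMostTwoColors col S := by
  rcases h.eq_empty_or_singleton with h | ⟨u, hu⟩
  · refine ⟨0, 0, fun x hx y hy hxy => ?_⟩
    rw [sdiff_eq_empty, subset_singleton_iff] at h
    exact absurd ((h x hx).trans (h y hy).symm) hxy
  · have hmem : ∀ x ∈ S, x ≠ v → x = u := fun x hx hxv =>
      mem_singleton_iff.1 (hu ▸ ⟨hx, hxv⟩ : x ∈ ({u} : Set V))
    refine ⟨col v u, col v u, fun x hx y hy hxy => Or.inl ?_⟩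
    rcases eq_or_ne x v with rfl | hxv
    · rw [hmem y hy (Ne.symm hxy)]
    · rcases eq_or_ne y v with rfl | hyv
      · rw [hmem x hx hxv, hsymm]
      · exact absurd ((hmem x hx hxv).trans (hmem y hy hyv).symm) hxy

open Classical in
noncomputable def contract (M : Set V) (m x : V) : V := if x ∈ M then m else x

lemma contract_of_mem {M : Set V} {m x : V} (hx : x ∈ M) : contract M m x = m := if_pos hx

lemma contract_of_notMem {M : Set V} {m x : V} (hx : x ∉ M) : contract M m x = x := if_neg hx

namespace IsProperModule

variable {M : Set V} {m : V}

lemma insert_diff_ssubset (hM : IsProperModule col S M) (hm : m ∈ M) :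
    insert m (S \ M) ⊂ S := by
  obtain ⟨m', hm', hm'm⟩ := hM.2.1.exists_ne m
  refine ssubset_of_subset_not_subset (insert_subset (hM.1.1 hm) sdiff_subset) fun h => ?_
  rcases h (hM.1.1 hm') with h | h
  · exact hm'm h
  · exact h.2 hm'

lemma insert_diff_nontrivial (hM : IsProperModule col S M) (hm : m ∈ M) :
    (insert m (S \ M)).Nontrivial := by
  obtain ⟨z, hzS, hzM⟩ := exists_of_ssubset hM.1
  exact ⟨m, mem_insert _ _, z, mem_insert_of_mem _ ⟨hzS, hzM⟩, fun h => hzM (h ▸ hm)⟩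

lemma col_eq_col_contract (hsymm : ∀ u v, col u v = col v u) (hM : IsProperModule col S M)
    (hm : m ∈ M) {x y : V} (hx : x ∈ S) (hy : y ∈ S)
    (hxy : contract M m x ≠ contract M m y) :
    col x y = col (contract M m x) (contract M m y) := by
  have hmod : ∀ u ∈ M, ∀ z ∈ S \ M, col u z = col m z := fun u hu z hz => by
    obtain ⟨c, hc⟩ := hM.2.2 z hz
    rw [hc u hu, hc m hm]
  by_cases hxM : x ∈ M <;> by_cases hyM : y ∈ M <;>
    simp only [contract_of_mem, contract_of_notMem, hxM, hyM, not_false_eq_true] at hxy ⊢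
  · exact absurd rfl hxy
  · exact hmod x hxM y ⟨hy, hyM⟩
  · rw [hsymm, hmod y hyM x ⟨hx, hxM⟩, hsymm]

lemma hasGallaiPartitionOn_of_contract (hsymm : ∀ u v, col u v = col v u)
    (hM : IsProperModule col S M) (hm : m ∈ M)
    (h : HasGallaiPartitionOn col (insert m (S \ M))) : HasGallaiPartitionOn col S := by
  obtain ⟨q, U, hq, hne, hdisj, hcover, hmono, a, b, htwo⟩ := h
  have hfix : ∀ x ∈ insert m (S \ M), contract M m x = x := by
    rintro x (rfl | ⟨-, hxM⟩)
    · exact contract_of_mem hm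
    · exact contract_of_notMem hxM
  have hmaps : ∀ x ∈ S, contract M m x ∈ insert m (S \ M) := fun x hx => by
    by_cases hxM : x ∈ M
    · rw [contract_of_mem hxM]
      exact mem_insert m _
    · rw [contract_of_notMem hxM]
      exact mem_insert_of_mem m ⟨hx, hxM⟩
  have hcol : ∀ i j, i ≠ j → ∀ x ∈ contract M m ⁻¹' U i ∩ S, ∀ y ∈ contract M m ⁻¹' U j ∩ S,
      col x y = col (contract M m x) (contract M m y) := fun i j hij x hx y hy =>
    hM.col_eq_col_contract hsymm hm hx.2 hy.2 ((hdisj i j hij).ne_of_mem hx.1 hy.1)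
  refine ⟨q, fun i => contract M m ⁻¹' U i ∩ S, hq, fun i => ?_, fun i j hij => ?_, ?_,
    fun i j hij => ?_, a, b, fun i j hij x hx y hy => ?_⟩
  · obtain ⟨y, hy⟩ := hne i
    have hyT : y ∈ insert m (S \ M) := hcover ▸ mem_iUnion.2 ⟨i, hy⟩
    exact ⟨y, by simp only [mem_preimage, hfix y hyT, hy], (insert_diff_ssubset hM hm).1 hyT⟩
  · exact ((hdisj i j hij).preimage (contract M m)).mono inter_subset_left inter_subset_left
  · rw [← iUnion_inter, ← preimage_iUnion, hcover]
    exact inter_eq_right.2 hmaps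
  · obtain ⟨c, hc⟩ := hmono i j hij
    exact ⟨c, fun x hx y hy => (hcol i j hij x hx y hy).trans (hc _ hx.1 _ hy.1)⟩
  · rw [hcol i j hij x hx y hy]
    exact htwo i j hij _ hx.1 _ hy.1

end IsProperModule

/-- The color-`c` component of `x` inside `S` is a module: along a `c`-edge `pu`, a vertex
`z` outside the component sees neither end in color `c`, so it sees both in the same one. -/
lemma col_eq_of_mem_colorComponent (hrb : ¬ HasRainbowTriangle col) {c : ℕ} {x z u : V}
    (hz : z ∈ S) (hzC : z ∉ colorComponent col S c x) (hu : u ∈ colorComponent col S c x) :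
    col u z = col x z := by
  induction hu with
  | refl => rfl
  | @tail p u hp hpu ih =>
    have hnc : ∀ w ∈ colorComponent col S c x, col w z ≠ c := fun w hw hwz =>
      hzC (Relation.ReflTransGen.tail hw ⟨hz, fun h => hzC (h ▸ hw), hwz⟩)
    have hu : u ∈ colorComponent col S c x := hp.tail hpu
    obtain ⟨-, hpu, hc⟩ := hpu
    rcases triangle_of_not_hasRainbowTriangle hrb hpu (fun h : u = z => hzC (h ▸ hu))
      (fun h : p = z => hzC (h ▸ hp)) with h | h | h
    · exact absurd (hc ▸ h).symm (hnc u hu)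
    · rw [h, ih]
    · exact absurd (hc ▸ h).symm (hnc p hp)

section Apex

variable (hrb : ¬ HasRainbowTriangle col) {ι : Type*} {U : ι → Set V} {v : V} {c : ℕ}
  (hvU : ∀ i, v ∉ U i) (hdisj : ∀ i j, i ≠ j → Disjoint (U i) (U j))
  (hmono : ∀ i j, i ≠ j → ∃ a, ∀ x ∈ U i, ∀ y ∈ U j, col x y = a)
  (hcross : ∀ i j, i ≠ j → ∀ x ∈ U i, ∀ y ∈ U j, col x y ≠ c)
  (hw : ∀ j, ∃ w ∈ U j, col v w = c)
include hrb hvU hdisj hmono hcross hw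

/-- The triangle through `v`, `x` and a `c`-neighbor of `v` in the part of `y`. -/
lemma col_crossing_eq {i j : ι} (hij : i ≠ j) {x y : V} (hx : x ∈ U i) (hxc : col v x ≠ c)
    (hy : y ∈ U j) : col x y = col v x := by
  obtain ⟨w, hwj, hvw⟩ := hw j
  obtain ⟨χ, hχ⟩ := hmono i j hij
  have hxw := hcross i j hij x hx w hwj
  rw [hχ x hx y hy, ← hχ x hx w hwj]
  rcases triangle_of_not_hasRainbowTriangle hrb (fun h : v = x => hvU i (h ▸ hx))
    ((hdisj i j hij).ne_of_mem hx hwj) (fun h : v = w => hvU j (h ▸ hwj)) with h | h | h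
  · exact h.symm
  · exact absurd (h.trans hvw) hxw
  · exact absurd (h.trans hvw) hxc

lemma col_apex_eq (hsymm : ∀ u v, col u v = col v u) [Nontrivial ι] {i k : ι} {x y : V}
    (hx : x ∈ U i) (hy : y ∈ U k) (hxc : col v x ≠ c) (hyc : col v y ≠ c) :
    col v x = col v y := by
  by_cases hik : i = k
  · subst hik
    obtain ⟨j, hji⟩ := exists_ne i
    obtain ⟨w, hwj, -⟩ := hw j
    obtain ⟨χ, hχ⟩ := hmono i j (Ne.symm hji)
    rw [← col_crossing_eq hrb hvU hdisj hmono hcross hw (Ne.symm hji) hx hxc hwj,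
      ← col_crossing_eq hrb hvU hdisj hmono hcross hw (Ne.symm hji) hy hyc hwj,
      hχ x hx w hwj, hχ y hy w hwj]
  · rw [← col_crossing_eq hrb hvU hdisj hmono hcross hw hik hx hxc hy,
      ← col_crossing_eq hrb hvU hdisj hmono hcross hw (Ne.symm hik) hy hyc hx, hsymm]

end Apex

namespace IsPrimeOn

lemma eq_of_closed (hrb : ¬ HasRainbowTriangle col) (hS : IsPrimeOn col S) {K : Set V}
    (hKS : K ⊆ S) {c : ℕ} (hK : ∀ x ∈ K, ∀ y ∈ S, x ≠ y → col x y = c → y ∈ K)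
    {x y : V} (hx : x ∈ K) (hy : y ∈ S) (hxy : x ≠ y) (hc : col x y = c) : K = S := by
  have hCK : colorComponent col S c x ⊆ K := fun u hu => by
    induction hu with
    | refl => exact hx
    | tail _ hpu ih => exact hK _ ih _ hpu.1 hpu.2.1 hpu.2.2
  have hmod : ∀ z ∈ S \ colorComponent col S c x, ∃ c', ∀ u ∈ colorComponent col S c x,
      col u z = c' := fun z hz =>
    ⟨col x z, fun u hu => col_eq_of_mem_colorComponent hrb hz.1 hz.2 hu⟩
  have hnt : (colorComponent col S c x).Nontrivial :=
    ⟨x, Relation.ReflTransGen.refl, y, Relation.ReflTransGen.single ⟨hy, hxy, hc⟩, hxy⟩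
  have hCS : colorComponent col S c x = S :=
    (hCK.trans hKS).eq_of_not_ssubset fun hss => hS _ ⟨hss, hnt, hmod⟩
  exact hKS.antisymm (hCS ▸ hCK)

variable (hsymm : ∀ u v, col u v = col v u) (hrb : ¬ HasRainbowTriangle col)
  (hS : IsPrimeOn col S)
include hsymm hrb hS

lemma exists_col_eq {c : ℕ} (hc : ∃ x ∈ S, ∃ y ∈ S, x ≠ y ∧ col x y = c) {v : V}
    (hv : v ∈ S) : ∃ z ∈ S, z ≠ v ∧ col v z = c := by
  by_contra! hno
  have hcv : ∀ x ∈ S, ∀ y ∈ S, x ≠ y → col x y = c → y ≠ v := by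
    rintro x hx y - hxy hxyc rfl
    exact hno x hx hxy (hsymm y x ▸ hxyc)
  obtain ⟨x, hx, y, hy, hxy, hxyc⟩ := hc
  have hxv : x ≠ v := fun h => hno y hy (fun h' => hxy (h.trans h'.symm)) (h ▸ hxyc)
  have := hS.eq_of_closed hrb sdiff_subset
    (fun x hx y hy hxy hxyc => ⟨hy, hcv x hx.1 y hy hxy hxyc⟩) ⟨hx, hxv⟩ hy hxy hxyc
  rw [← this] at hv
  exact hv.2 rfl

lemma exists_col_eq_of_partition {ι : Type*} {U : ι → Set V} {v : V} (hv : v ∈ S)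
    (hcover : (⋃ i, U i) = S \ {v}) {c : ℕ} (hc : ∃ x ∈ S, ∃ y ∈ S, x ≠ y ∧ col x y = c)
    (hcross : ∀ i j, i ≠ j → ∀ x ∈ U i, ∀ y ∈ U j, col x y ≠ c) {i : ι}
    (hne : (U i).Nonempty) : ∃ w ∈ U i, col v w = c := by
  by_contra! hno
  have hUS : ∀ j, U j ⊆ S \ {v} := fun j => hcover ▸ subset_iUnion U j
  obtain ⟨u, hu⟩ := hne
  obtain ⟨z, hz, hzu, hcz⟩ := hS.exists_col_eq hsymm hrb hc (hUS i hu).1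
  have hclosed : ∀ x ∈ U i, ∀ y ∈ S, x ≠ y → col x y = c → y ∈ U i := by
    intro x hx y hy hxy hxyc
    have hyv : y ≠ v := by
      rintro rfl
      exact hno x hx (hsymm y x ▸ hxyc)
    obtain ⟨j, hj⟩ := mem_iUnion.1 (hcover ▸ ⟨hy, hyv⟩ : y ∈ ⋃ j, U j)
    by_cases hji : j = i
    · exact hji ▸ hj
    · exact absurd hxyc (hcross i j (Ne.symm hji) x hx y hj)
  have := hS.eq_of_closed hrb (fun x hx => (hUS i hx).1) hclosed hu hz (Ne.symm hzu) hcz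
  exact (hUS i (this ▸ hv)).2 rfl

lemma usesAtMostTwoColors {v : V} (hv : v ∈ S) (h : HasGallaiPartitionOn col (S \ {v})) :
    UsesAtMostTwoColors col S := by
  obtain ⟨q, U, hq, hne, hdisj, hcover, hmono, a, b, htwo⟩ := h
  have : Nontrivial (Fin q) := Fin.nontrivial_iff_two_le.2 hq
  by_cases hc : ∃ c, (∃ x ∈ S, ∃ y ∈ S, x ≠ y ∧ col x y = c) ∧ c ≠ a ∧ c ≠ b
  swap
  · push Not at hc
    refine ⟨a, b, fun x hx y hy hxy => ?_⟩
    by_cases hxa : col x y = a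
    · exact Or.inl hxa
    · exact Or.inr (hc _ ⟨x, hx, y, hy, hxy, rfl⟩ hxa)
  obtain ⟨c, hcS, hca, hcb⟩ := hc
  have hcross : ∀ i j, i ≠ j → ∀ x ∈ U i, ∀ y ∈ U j, col x y ≠ c := fun i j hij x hx y hy h => by
    rcases htwo i j hij x hx y hy with h' | h' <;> omega
  have hvU : ∀ i, v ∉ U i := fun i hvi => (hcover ▸ subset_iUnion U i hvi : v ∈ S \ {v}).2 rfl
  have hw : ∀ i, ∃ w ∈ U i, col v w = c := fun i =>
    hS.exists_col_eq_of_partition hsymm hrb hv hcover hcS hcross (hne i)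
  have hpart : ∀ x ∈ S \ {v}, ∃ i, x ∈ U i := fun x hx => mem_iUnion.1 (hcover ▸ hx)
  obtain ⟨d, hd⟩ : ∃ d, ∀ x ∈ S \ {v}, col v x ≠ c → col v x = d := by
    by_cases h : ∃ y ∈ S \ {v}, col v y ≠ c
    · obtain ⟨y, hy, hyc⟩ := h
      obtain ⟨k, hk⟩ := hpart y hy
      refine ⟨col v y, fun x hx hxc => ?_⟩
      obtain ⟨i, hi⟩ := hpart x hx
      exact col_apex_eq hrb hvU hdisj hmono hcross hw hsymm hi hk hxc hyc
    · push Not at h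
      exact ⟨c, fun x hx hxc => absurd (h x hx) hxc⟩
  refine ⟨c, d, fun x hx y hy hxy => ?_⟩
  obtain ⟨z, hz, hzv, hvz⟩ := hS.exists_col_eq hsymm hrb ⟨x, hx, y, hy, hxy, rfl⟩ hv
  rw [← hvz]
  by_cases hzc : col v z = c
  · exact Or.inl hzc
  · exact Or.inr (hd z ⟨hz, hzv⟩ hzc)

end IsPrimeOn

theorem hasGallaiPartitionOn (hsymm : ∀ u v, col u v = col v u)
    (hrb : ¬ HasRainbowTriangle col) (hS : S.Finite) (hnt : S.Nontrivial) :
    HasGallaiPartitionOn col S := by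
  induction hn : S.ncard using Nat.strong_induction_on generalizing S with
  | _ n ih =>
    by_cases htwo : UsesAtMostTwoColors col S
    · exact hasGallaiPartitionOn_of_usesAtMostTwoColors hS hnt htwo
    by_cases hprime : IsPrimeOn col S
    · obtain ⟨v, hv⟩ := hnt.nonempty
      have hS' : (S \ {v}).Nontrivial := not_subsingleton_iff.1 fun h =>
        htwo (usesAtMostTwoColors_of_subsingleton_diff hsymm h)
      exact absurd (hprime.usesAtMostTwoColors hsymm hrb hv (ih _
        (hn ▸ ncard_sdiff_singleton_lt_of_mem hv hS) (hS.subset sdiff_subset) hS' rfl)) htwo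
    · obtain ⟨M, hM⟩ := not_forall_not.1 hprime
      obtain ⟨m, hm⟩ := hM.2.1.nonempty
      exact hM.hasGallaiPartitionOn_of_contract hsymm hm (ih _
        (hn ▸ ncard_lt_ncard (hM.insert_diff_ssubset hm) hS)
        (hS.subset (hM.insert_diff_ssubset hm).1) (hM.insert_diff_nontrivial hm) rfl)

end Gallai

/-- Gallai's theorem: a colored complete graph on at least 2 vertices without
rainbow triangles has a Gallai partition. -/
theorem stmt10 {V : Type*} [Fintype V] (col : V → V → ℕ)
    (hsymm : ∀ u v, col u v = col v u)
    (hcard : 2 ≤ Fintype.card V)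
    (hrb : ¬ HasRainbowTriangle col) :
    HasGallaiPartition col := by
  have : Nontrivial V := Fintype.one_lt_card_iff_nontrivial.1 hcard
  exact Gallai.hasGallaiPartitionOn hsymm hrb Set.finite_univ Set.nontrivial_univ
end

section
/- Let G be an edge-colored complete graph with vertex set partitioned as {v0} ∪ V1 ∪ … ∪ Vp satisfying: all edges between V0:={v0} and Vi have color c_i with the c_i pairwise distinct, all edges between Vi and Vj have colors in {c_i, c_j}, and all edges inside Vi have color c_i. Then v0 is not contained in any properly edge-colored cycle of G, and no edge with both endpoints in a single part Vi is contained in any properly edge-colored cycle of G. -/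
/-- Key induction: walking along a PC cycle, if the first edge is colored with
the part-color of its head, every subsequent edge is colored with the
part-color of its head (and never reaches `v0`). -/
lemma auxQ {V : Type*} (col : V → V → ℕ) (hsymm : ∀ u v, col u v = col v u)
    (v0 : V) (f : V → ℕ)
    (hf0 : ∀ u, u ≠ v0 → col v0 u = f u)
    (hkey : ∀ u v, u ≠ v0 → v ≠ v0 → u ≠ v → col u v = f u ∨ col u v = f v)
    (m : ℕ) (c : ZMod m → V) (hpc : IsPCCycle col m c) (j : ZMod m)
    (h0 : c (j + 1) ≠ v0) (h0c : col (c j) (c (j + 1)) = f (c (j + 1))) :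
    ∀ k : ℕ, c (j + (k : ZMod m) + 1) ≠ v0 ∧
      col (c (j + (k : ZMod m))) (c (j + (k : ZMod m) + 1)) =
        f (c (j + (k : ZMod m) + 1)) := by
  obtain ⟨hm, hinj, hpcc⟩ := hpc
  have h1ne0 : (1 : ZMod m) ≠ 0 := by
    haveI : Fact (1 < m) := ⟨by omega⟩
    exact one_ne_zero
  intro k
  induction k with
  | zero => simpa using ⟨h0, h0c⟩
  | succ k ih =>
    obtain ⟨ihne, ihc⟩ := ih
    have hpck := hpcc (j + (k : ZMod m))
    have h2 : j + (k : ZMod m) + 2 = j + (k : ZMod m) + 1 + 1 := by ring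
    rw [h2] at hpck
    have hcast : j + ((k + 1 : ℕ) : ZMod m) = j + (k : ZMod m) + 1 := by
      push_cast; ring
    by_cases hb : c (j + (k : ZMod m) + 1 + 1) = v0
    · exfalso
      apply hpck
      rw [ihc, hb, hsymm, hf0 _ ihne]
    · have hab : c (j + (k : ZMod m) + 1) ≠ c (j + (k : ZMod m) + 1 + 1) := by
        intro h
        exact h1ne0 (left_eq_add.mp (hinj h))
      rcases hkey _ _ ihne hb hab with h | h
      · exact absurd (ihc.trans h.symm) hpck
      · rw [hcast]
        exact ⟨hb, h⟩

/-- In the partition structure of Lemma 3, the vertex v0 lies on no PC cycle,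
and no edge inside a part Vi lies on a PC cycle. -/
theorem stmt14 {V : Type*} (col : V → V → ℕ)
    (hsymm : ∀ u v, col u v = col v u)
    (p : ℕ) (v0 : V) (Vs : Fin p → Set V) (cc : Fin p → ℕ)
    (hv0 : ∀ i, v0 ∉ Vs i)
    (hunion : ({v0} ∪ ⋃ i, Vs i) = (Set.univ : Set V))
    (hdisj : ∀ i j, i ≠ j → Disjoint (Vs i) (Vs j))
    (hinj : Function.Injective cc)
    (hcol0 : ∀ i, ∀ y ∈ Vs i, col v0 y = cc i)
    (hcross : ∀ i j, i ≠ j → ∀ x ∈ Vs i, ∀ y ∈ Vs j,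
      col x y = cc i ∨ col x y = cc j)
    (hin : ∀ i, ∀ x ∈ Vs i, ∀ y ∈ Vs i, x ≠ y → col x y = cc i) :
    (∀ (m : ℕ) (c : ZMod m → V), IsPCCycle col m c → v0 ∉ Set.range c) ∧
    (∀ i, ∀ x ∈ Vs i, ∀ y ∈ Vs i, x ≠ y →
      ∀ (m : ℕ) (c : ZMod m → V), IsPCCycle col m c →
        ¬ ∃ j : ZMod m, (c j = x ∧ c (j + 1) = y) ∨
          (c j = y ∧ c (j + 1) = x)) := by
  classical
  -- every vertex other than v0 is in some part
  have hex : ∀ u : V, u ≠ v0 → ∃ i, u ∈ Vs i := by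
    intro u hu
    have hu' : u ∈ ({v0} ∪ ⋃ i, Vs i : Set V) := hunion ▸ Set.mem_univ u
    rcases hu' with h | h
    · exact absurd h hu
    · exact Set.mem_iUnion.mp h
  set f : V → ℕ := fun u => if h : ∃ i, u ∈ Vs i then cc h.choose else 0 with hf
  have hfmem : ∀ u (i : Fin p), u ∈ Vs i → f u = cc i := by
    intro u i hu
    have hEx : ∃ i, u ∈ Vs i := ⟨i, hu⟩
    have hmem := hEx.choose_spec
    have : hEx.choose = i := by
      by_contra hne
      exact (hdisj _ _ hne).le_bot ⟨hmem, hu⟩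
    simp only [hf, dif_pos hEx, this]
  have hf0 : ∀ u, u ≠ v0 → col v0 u = f u := by
    intro u hu
    obtain ⟨i, hi⟩ := hex u hu
    rw [hfmem u i hi]
    exact hcol0 i u hi
  have hkey : ∀ u v, u ≠ v0 → v ≠ v0 → u ≠ v →
      col u v = f u ∨ col u v = f v := by
    intro u v hu hv huv
    obtain ⟨i, hi⟩ := hex u hu
    obtain ⟨i', hi'⟩ := hex v hv
    rw [hfmem u i hi, hfmem v i' hi']
    by_cases hii : i = i'
    · subst hii
      exact Or.inl (hin i u hi v hi' huv)
    · exact hcross i i' hii u hi v hi'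
  constructor
  · -- v0 is on no PC cycle
    intro m c hpc hmem
    obtain ⟨j, hj⟩ := hmem
    obtain ⟨hm, hinjc, hpcc⟩ := hpc
    have h1ne0 : (1 : ZMod m) ≠ 0 := by
      haveI : Fact (1 < m) := ⟨by omega⟩
      exact one_ne_zero
    have h0 : c (j + 1) ≠ v0 := by
      intro h
      exact h1ne0 (add_eq_left.mp (hinjc (h.trans hj.symm)))
    have h0c : col (c j) (c (j + 1)) = f (c (j + 1)) := by
      rw [hj]; exact hf0 _ h0
    obtain ⟨Qne, Qc⟩ := auxQ col hsymm v0 f hf0 hkey m c ⟨hm, hinjc, hpcc⟩ j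
      h0 h0c (m - 2)
    have hc2 : ((m - 2 : ℕ) : ZMod m) + 2 = 0 := by
      have h : ((m - 2 + 2 : ℕ) : ZMod m) = 0 := by
        rw [show m - 2 + 2 = m from by omega, ZMod.natCast_self]
      push_cast at h
      exact h
    have e2 : j + ((m - 2 : ℕ) : ZMod m) + 2 = j := by
      linear_combination hc2
    have hpck := hpcc (j + ((m - 2 : ℕ) : ZMod m))
    rw [e2, hj] at hpck
    apply hpck
    rw [Qc, hsymm, hf0 _ Qne]
  · -- no edge inside a part is on a PC cycle
    intro i x hx y hy hxy m c hpc ⟨j, hj⟩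
    obtain ⟨hm, hinjc, hpcc⟩ := hpc
    have hc1 : ((m - 1 : ℕ) : ZMod m) + 1 = 0 := by
      have h : ((m - 1 + 1 : ℕ) : ZMod m) = 0 := by
        rw [show m - 1 + 1 = m from by omega, ZMod.natCast_self]
      push_cast at h
      exact h
    have e1 : j + ((m - 1 : ℕ) : ZMod m) + 1 = j := by
      linear_combination hc1
    have e1' : j + ((m - 1 : ℕ) : ZMod m) + 2 = j + 1 := by
      linear_combination hc1
    have core : ∀ x' y', x' ∈ Vs i → y' ∈ Vs i → x' ≠ y' →
        c j = x' → c (j + 1) = y' → False := by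
      intro x' y' hx' hy' hne hj1 hj2
      have hx0 : x' ≠ v0 := fun h => hv0 i (h ▸ hx')
      have hy0 : y' ≠ v0 := fun h => hv0 i (h ▸ hy')
      have h0 : c (j + 1) ≠ v0 := by rw [hj2]; exact hy0
      have h0c : col (c j) (c (j + 1)) = f (c (j + 1)) := by
        rw [hj1, hj2, hfmem y' i hy']
        exact hin i x' hx' y' hy' hne
      obtain ⟨Qne, Qc⟩ := auxQ col hsymm v0 f hf0 hkey m c ⟨hm, hinjc, hpcc⟩ j
        h0 h0c (m - 1)
      rw [e1, hj1, hfmem x' i hx'] at Qc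
      have hpck := hpcc (j + ((m - 1 : ℕ) : ZMod m))
      rw [e1, e1', hj1, hj2] at hpck
      rw [Qc] at hpck
      exact hpck (hin i x' hx' y' hy' hne).symm
    rcases hj with ⟨hj1, hj2⟩ | ⟨hj1, hj2⟩
    · exact core x y hx hy hxy hj1 hj2
    · exact core y x hy hx hxy.symm hj1 hj2
end
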